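/- arXiv:1003.1180 — 9 statements merged into one kernel-verified Lean document; each statement's English description precedes it below -/
import Mathlib

section
/- The exchange relation of coefficient tuples is an involution: let (P,⊕) be a semifield, I a finite index set, B = (B_{ij})_{i,j∈I} an integer matrix, k ∈ I, and y = (y_i)_{i∈I} ∈ P^I. Define y' ∈ P^I by y'_k = y_k^{-1} and, for i ≠ k, y'_i = y_i·(y_k/(1⊕y_k))^{B_{ki}} if B_{ki} ≥ 0 and y'_i = y_i·(1⊕y_k)^{−B_{ki}} if B_{ki} ≤ 0. Let B' = μ_k(B) and define y'' ∈ P^I from the pair (B', y') by the same rule at k, i.e. y''_k = (y'_k)^{-1} and, for i ≠ k, y''_i = y'_i·(y'_k/(1⊕y'_k))^{B'_{ki}} if B'_{ki} ≥ 0 and y''_i = y'_i·(1⊕y'_k)^{−B'_{ki}} if B'_{ki} ≤ 0. Then y'' = y. -/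
/-!
Writing `b = B k i`, both branches of the exchange rule are the single formula
`y'_i = y_i · y_k ^ b⁺ · (1 ⊕ y_k) ^ (-b)`. Mutation negates row `k` of `B`, and distributivity
gives `1 ⊕ y_k⁻¹ = y_k⁻¹ · (1 ⊕ y_k)`, so applying the rule twice multiplies `y_i` by
`y_k ^ (b⁺ - b⁻ - b) = 1`.
-/

/-- Mutation of an integer matrix at index `k` (the matrix mutation underlying
seed mutation in the theory of cluster algebras with coefficients). -/
def mutateMat {I : Type*} [Fintype I] [DecidableEq I]
    (B : Matrix I I ℤ) (k : I) : Matrix I I ℤ :=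
  Matrix.of fun i j =>
    if i = k ∨ j = k then -B i j
    else B i j + (|B i k| * B k j + B i k * |B k j|) / 2

section

variable {P : Type*} [CommGroup P] {I : Type*} [DecidableEq I]

theorem ite_nonneg_mul_zpow_eq (b : ℤ) (y x s : P) :
    (if 0 ≤ b then y * (x / s) ^ b else y * s ^ (-b)) = y * x ^ b⁺ * s ^ (-b) := by
  split_ifs with hb
  · rw [posPart_eq_self.mpr hb, div_zpow, zpow_neg, div_eq_mul_inv, mul_assoc]
  · rw [posPart_eq_zero.mpr (le_of_not_ge hb), zpow_zero, mul_one]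

theorem op_one_inv (op : P → P → P) (hcomm : ∀ a b : P, op a b = op b a)
    (hdistrib : ∀ a b c : P, a * op b c = op (a * b) (a * c)) (x : P) :
    op 1 x⁻¹ = x⁻¹ * op 1 x := by
  rw [hdistrib, mul_one, inv_mul_cancel, hcomm]

theorem mutateMat_self_apply [Fintype I] (B : Matrix I I ℤ) (k j : I) :
    mutateMat B k k j = -B k j := by
  simp [mutateMat]

def mutateCoeff (op : P → P → P) (B : Matrix I I ℤ) (k : I) (y : I → P) :
    I → P := fun i =>
  if i = k then (y k)⁻¹
  else if 0 ≤ B k i then y i * (y k / op 1 (y k)) ^ (B k i)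
  else y i * (op 1 (y k)) ^ (-(B k i))

theorem mutateCoeff_of_ne (op : P → P → P) (B : Matrix I I ℤ) {k i : I} (y : I → P)
    (hik : i ≠ k) :
    mutateCoeff op B k y i = y i * y k ^ (B k i)⁺ * op 1 (y k) ^ (-B k i) := by
  rw [mutateCoeff, if_neg hik, ite_nonneg_mul_zpow_eq]

theorem mutateCoeff_mutateMat_mutateCoeff [Fintype I] (op : P → P → P)
    (hcomm : ∀ a b : P, op a b = op b a)
    (hdistrib : ∀ a b c : P, a * op b c = op (a * b) (a * c)) (B : Matrix I I ℤ) (k : I)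
    (y : I → P) : mutateCoeff op (mutateMat B k) k (mutateCoeff op B k y) = y := by
  funext i
  have hk : mutateCoeff op B k y k = (y k)⁻¹ := if_pos rfl
  by_cases hik : i = k
  · subst hik
    rw [mutateCoeff, if_pos rfl, hk, inv_inv]
  · rw [mutateCoeff_of_ne _ _ _ hik, mutateCoeff_of_ne _ _ _ hik, hk, mutateMat_self_apply,
      op_one_inv op hcomm hdistrib, posPart_neg, neg_neg, mul_zpow, inv_zpow', inv_zpow']
    calc y i * y k ^ (B k i)⁺ * op 1 (y k) ^ (-B k i) * y k ^ (-(B k i)⁻)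
          * (y k ^ (-B k i) * op 1 (y k) ^ B k i)
        = y i * y k ^ ((B k i)⁺ - (B k i)⁻ - B k i) := by
          simp only [zpow_sub, zpow_neg]; ac_nf; simp
      _ = y i := by rw [posPart_sub_negPart, sub_self, zpow_zero, mul_one]

end

theorem coefficient_mutation_involution_general
    {P : Type*} [CommGroup P] (op : P → P → P)
    (hcomm : ∀ a b : P, op a b = op b a)
    (hdistrib : ∀ a b c : P, a * op b c = op (a * b) (a * c))
    {I : Type*} [Fintype I] [DecidableEq I]
    (B : Matrix I I ℤ) (k : I) (y y' y'' : I → P)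
    (hy' : ∀ i, y' i =
      if i = k then (y k)⁻¹
      else if 0 ≤ B k i then y i * (y k / op 1 (y k)) ^ (B k i)
      else y i * (op 1 (y k)) ^ (-(B k i)))
    (hy'' : ∀ i, y'' i =
      if i = k then (y' k)⁻¹
      else if 0 ≤ mutateMat B k k i then y' i * (y' k / op 1 (y' k)) ^ (mutateMat B k k i)
      else y' i * (op 1 (y' k)) ^ (-(mutateMat B k k i))) :
    y'' = y := by
  obtain rfl : y' = mutateCoeff op B k y := funext hy'
  obtain rfl : y'' = mutateCoeff op (mutateMat B k) k (mutateCoeff op B k y) := funext hy''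
  exact mutateCoeff_mutateMat_mutateCoeff op hcomm hdistrib B k y

/-- The exchange relation of coefficient tuples is an involution.
Here `(P, op)` is a semifield: `P` is an abelian multiplicative group and `op` (the
auxiliary addition `⊕`) is commutative, associative, and distributive with respect to
the multiplication of `P`. -/
theorem coefficient_mutation_involution
    {P : Type*} [CommGroup P] (op : P → P → P)
    (hcomm : ∀ a b : P, op a b = op b a)
    (hassoc : ∀ a b c : P, op (op a b) c = op a (op b c))
    (hdistrib : ∀ a b c : P, a * op b c = op (a * b) (a * c))
    {I : Type*} [Fintype I] [DecidableEq I]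
    (B : Matrix I I ℤ) (k : I) (y y' y'' : I → P)
    (hy' : ∀ i, y' i =
      if i = k then (y k)⁻¹
      else if 0 ≤ B k i then y i * (y k / op 1 (y k)) ^ (B k i)
      else y i * (op 1 (y k)) ^ (-(B k i)))
    (hy'' : ∀ i, y'' i =
      if i = k then (y' k)⁻¹
      else if 0 ≤ mutateMat B k k i then y' i * (y' k / op 1 (y' k)) ^ (mutateMat B k k i)
      else y' i * (op 1 (y' k)) ^ (-(mutateMat B k k i))) :
    y'' = y :=
  coefficient_mutation_involution_general op hcomm hdistrib B k y y' y'' hy' hy''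
end

section
/- (Lemma on the embedding map g, odd case, part (i).) Let t ≥ 1 be odd and ℓ ≥ 2. For every (1,m,v) ∈ 𝓘_{ℓ+} there is a unique j ∈ {0,1,…,t−1} with m + (v+1) ≡ 2j/t (mod 2ℤ). Define g : 𝓘_{ℓ+} → 𝐈 × (1/t)ℤ by: g(2,m,v) = ((t+1,m), v + 1/t); and g(1,m,v) = ((2j+1,m), v+1) if 0 ≤ j ≤ (t−1)/2, g(1,m,v) = ((2t−2j,m), v+1) if (t+1)/2 ≤ j ≤ t−1, where j is the unique index above. Then g is a bijection from 𝓘_{ℓ+} onto {(𝐢,u) ∈ 𝐈 × (1/t)ℤ : (𝐢,u) satisfies p_+}. -/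
/- We encode `u ∈ (1/t)ℤ` by the integer `n = t·u`.  A triple `(a, m, u)` of the index
set `𝓘_ℓ` is encoded as `(a, m, n) : ℤ × ℤ × ℤ`, and a pair `(𝐢, u) = ((i, i'), u)` of
`𝐈 × (1/t)ℤ` is encoded as `((i, i'), n) : (ℤ × ℤ) × ℤ`. -/

/-- The set `𝓘_{ℓ+}` of triples of `𝓘_ℓ` satisfying the parity condition `P_+`
(for the rank-2 Cartan matrix `M_t` with `t` odd): `m + tu` odd for `a = 1`,
`m + tu` even for `a = 2`. -/
def IndexSetPlusOdd (t ℓ : ℤ) : Set (ℤ × ℤ × ℤ) :=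
  {x | (x.1 = 1 ∧ 1 ≤ x.2.1 ∧ x.2.1 ≤ ℓ - 1 ∧ Odd (x.2.1 + x.2.2)) ∨
       (x.1 = 2 ∧ 1 ≤ x.2.1 ∧ x.2.1 ≤ t * ℓ - 1 ∧ Even (x.2.1 + x.2.2))}

/-- Membership of `(i, i')` in the vertex set `𝐈` of the quiver `Q_ℓ(M_t)`. -/
def memI (t ℓ i i' : ℤ) : Prop :=
  (1 ≤ i ∧ i ≤ t ∧ 1 ≤ i' ∧ i' ≤ ℓ - 1) ∨ (i = t + 1 ∧ 1 ≤ i' ∧ i' ≤ t * ℓ - 1)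

/-- The vertex `(i, i')` of `𝐈` carries the sign `+`. -/
def sgnPlus (t i i' : ℤ) : Prop :=
  (i = t + 1 ∧ Odd i') ∨ (i ≠ t + 1 ∧ Odd (i + i'))

/-- The condition `p_+` on a pair `(𝐢, u) = ((i, i'), n/t)`, for `t` odd; here
`p = n % (2t)` is the unique `p ∈ {0, …, 2t−1}` with `u ≡ p/t (mod 2ℤ)`. -/
def pPlusOdd (t i i' n : ℤ) : Prop :=
  (Even (n % (2 * t)) ∧ n % (2 * t) ≤ t - 1 ∧
    ((i = t + 1 ∧ sgnPlus t i i') ∨ (i = n % (2 * t) + 1 ∧ sgnPlus t i i'))) ∨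
  (Odd (n % (2 * t)) ∧ n % (2 * t) ≤ t - 1 ∧
    ((i = t + 1 ∧ ¬ sgnPlus t i i') ∨ (i = t - n % (2 * t) ∧ sgnPlus t i i'))) ∨
  (Even (n % (2 * t)) ∧ t ≤ n % (2 * t) ∧
    ((i = t + 1 ∧ sgnPlus t i i') ∨ (i = 2 * t - n % (2 * t) ∧ ¬ sgnPlus t i i'))) ∨
  (Odd (n % (2 * t)) ∧ t ≤ n % (2 * t) ∧
    ((i = t + 1 ∧ ¬ sgnPlus t i i') ∨ (i = n % (2 * t) + 1 - t ∧ ¬ sgnPlus t i i')))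

/-- The set `{(𝐢, u) ∈ 𝐈 × (1/t)ℤ : (𝐢, u) satisfies p_+}`, for `t` odd. -/
def targetSetOdd (t ℓ : ℤ) : Set ((ℤ × ℤ) × ℤ) :=
  {x | memI t ℓ x.1.1 x.1.2 ∧ pPlusOdd t x.1.1 x.1.2 x.2}

lemma exu_j (t m n : ℤ) (ht : 1 ≤ t) (htodd : Odd t) (hmn : Odd (m + n)) :
    ∃! j : ℤ, 0 ≤ j ∧ j ≤ t - 1 ∧ (2 * t) ∣ (t * m + n + t - 2 * j) := by
  obtain ⟨s, hs⟩ := htodd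
  obtain ⟨c, hc⟩ := hmn
  have hK : t * m + n + t = 2 * (s * m + c + s + 1) := by linear_combination m * hs + hc + hs
  set K : ℤ := s * m + c + s + 1 with hKdef
  refine ⟨K % t, ⟨Int.emod_nonneg _ (by omega), by
      have := Int.emod_lt_of_pos K (show (0:ℤ) < t by omega); omega,
      ⟨K / t, by linear_combination hK - 2 * (Int.mul_ediv_add_emod K t)⟩⟩, ?_⟩
  rintro j ⟨hj0, hj1, q, hq⟩
  have h1 : 0 ≤ K % t := Int.emod_nonneg _ (by omega)
  have h2 : K % t < t := Int.emod_lt_of_pos K (by omega)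
  have h3 : t * (K / t) + K % t = K := Int.mul_ediv_add_emod K t
  have hd : t ∣ (j - K % t) := by
    refine ⟨K / t - q, ?_⟩
    have : (2:ℤ) * (j - K % t) = 2 * (t * (K / t - q)) := by
      linear_combination hK - hq - 2 * h3
    linarith
  have := Int.eq_zero_of_abs_lt_dvd hd (abs_lt.mpr ⟨by omega, by omega⟩)
  omega

/-- Lemma on the embedding map `g`, odd case, part (i):  for every `(1, m, v) ∈ 𝓘_{ℓ+}`
there is a unique `j ∈ {0, …, t−1}` with `m + (v+1) ≡ 2j/t (mod 2ℤ)` (encoded as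
`2t ∣ t·m + n + t − 2j` for `v = n/t`), and any map `g` satisfying the defining clauses
`g(2,m,v) = ((t+1,m), v + 1/t)` and `g(1,m,v) = ((2j+1,m), v+1)` for `0 ≤ j ≤ (t−1)/2`,
`g(1,m,v) = ((2t−2j,m), v+1)` for `(t+1)/2 ≤ j ≤ t−1`, is a bijection from `𝓘_{ℓ+}`
onto `{(𝐢,u) : p_+}`. -/
theorem embedding_g_odd_bijective (t ℓ : ℤ) (ht : 1 ≤ t) (htodd : Odd t) (hℓ : 2 ≤ ℓ) :
    (∀ m n : ℤ, ((1, m, n) : ℤ × ℤ × ℤ) ∈ IndexSetPlusOdd t ℓ →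
      ∃! j : ℤ, 0 ≤ j ∧ j ≤ t - 1 ∧ (2 * t) ∣ (t * m + n + t - 2 * j)) ∧
    (∀ g : ℤ × ℤ × ℤ → (ℤ × ℤ) × ℤ,
      (∀ m n : ℤ, ((2, m, n) : ℤ × ℤ × ℤ) ∈ IndexSetPlusOdd t ℓ →
        g (2, m, n) = ((t + 1, m), n + 1)) →
      (∀ m n j : ℤ, ((1, m, n) : ℤ × ℤ × ℤ) ∈ IndexSetPlusOdd t ℓ →
        0 ≤ j → j ≤ t - 1 → (2 * t) ∣ (t * m + n + t - 2 * j) → 2 * j + 1 ≤ t →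
        g (1, m, n) = ((2 * j + 1, m), n + t)) →
      (∀ m n j : ℤ, ((1, m, n) : ℤ × ℤ × ℤ) ∈ IndexSetPlusOdd t ℓ →
        0 ≤ j → j ≤ t - 1 → (2 * t) ∣ (t * m + n + t - 2 * j) → t + 1 ≤ 2 * j →
        g (1, m, n) = ((2 * t - 2 * j, m), n + t)) →
      Set.BijOn g (IndexSetPlusOdd t ℓ) (targetSetOdd t ℓ)) := by
  have ht2 : t % 2 = 1 := Int.odd_iff.mp htodd
  obtain ⟨s, hs⟩ := id htodd
  constructor
  · intro m n hmem
    have hmn : Odd (m + n) := by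
      rcases hmem with h | h
      · exact h.2.2.2
      · exact absurd h.1 (by norm_num)
    exact exu_j t m n ht htodd hmn
  · intro g hg2 hg1a hg1b
    refine ⟨?_, ?_, ?_⟩
    · -- MapsTo
      rintro ⟨a, m, n⟩ hx
      rcases hx with ⟨ha, hm1, hm2, hpar⟩ | ⟨ha, hm1, hm2, hpar⟩
      · -- a = 1
        simp only at ha hm1 hm2 hpar
        subst ha
        obtain ⟨j, ⟨hj0, hj1, hjd⟩, -⟩ := exu_j t m n ht htodd hpar
        obtain ⟨q, hq⟩ := hjd
        have hdom : ((1, m, n) : ℤ × ℤ × ℤ) ∈ IndexSetPlusOdd t ℓ :=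
          Or.inl ⟨rfl, hm1, hm2, hpar⟩
        rcases le_or_gt (2 * j + 1) t with hb | hb
        · -- i = 2j+1
          rw [hg1a m n j hdom hj0 hj1 ⟨q, hq⟩ hb]
          show memI t ℓ (2 * j + 1) m ∧ pPlusOdd t (2 * j + 1) m (n + t)
          refine ⟨Or.inl ⟨by omega, by omega, hm1, hm2⟩, ?_⟩
          rcases Int.even_or_odd m with ⟨r, hr⟩ | ⟨r, hr⟩
          · -- m even : p = 2j
            have hp : (n + t) % (2 * t) = 2 * j := by
              have h1 : n + t = 2 * j + 2 * t * (q - r) := by linear_combination hq - t * hr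
              rw [h1, Int.add_mul_emod_self_left, Int.emod_eq_of_lt (by omega) (by omega)]
            unfold pPlusOdd
            rw [hp]
            refine Or.inl ⟨⟨j, by ring⟩, by omega, Or.inr ⟨rfl, Or.inr ⟨by omega, ⟨j + r, by omega⟩⟩⟩⟩
          · -- m odd : p = 2j + t
            have hp : (n + t) % (2 * t) = 2 * j + t := by
              have h1 : n + t = (2 * j + t) + 2 * t * (q - r - 1) := by
                linear_combination hq - t * hr
              rw [h1, Int.add_mul_emod_self_left, Int.emod_eq_of_lt (by omega) (by omega)]
            unfold pPlusOdd
            rw [hp]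
            refine Or.inr (Or.inr (Or.inr ⟨⟨j + s, by omega⟩, by omega, Or.inr ⟨by omega, ?_⟩⟩))
            rintro (⟨h1, -⟩ | ⟨-, w, hw⟩)
            · omega
            · omega
        · -- i = 2t - 2j
          have hb' : t + 1 ≤ 2 * j := by omega
          rw [hg1b m n j hdom hj0 hj1 ⟨q, hq⟩ hb']
          show memI t ℓ (2 * t - 2 * j) m ∧ pPlusOdd t (2 * t - 2 * j) m (n + t)
          refine ⟨Or.inl ⟨by omega, by omega, hm1, hm2⟩, ?_⟩
          rcases Int.even_or_odd m with ⟨r, hr⟩ | ⟨r, hr⟩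
          · -- m even : p = 2j
            have hp : (n + t) % (2 * t) = 2 * j := by
              have h1 : n + t = 2 * j + 2 * t * (q - r) := by linear_combination hq - t * hr
              rw [h1, Int.add_mul_emod_self_left, Int.emod_eq_of_lt (by omega) (by omega)]
            unfold pPlusOdd
            rw [hp]
            refine Or.inr (Or.inr (Or.inl ⟨⟨j, by ring⟩, by omega, Or.inr ⟨rfl, ?_⟩⟩))
            rintro (⟨-, w, hw⟩ | ⟨-, w, hw⟩) <;> omega
          · -- m odd : p = 2j - t
            have hp : (n + t) % (2 * t) = 2 * j - t := by
              have h1 : n + t = (2 * j - t) + 2 * t * (q - r) := by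
                linear_combination hq - t * hr
              rw [h1, Int.add_mul_emod_self_left, Int.emod_eq_of_lt (by omega) (by omega)]
            unfold pPlusOdd
            rw [hp]
            exact Or.inr (Or.inl ⟨⟨j - s - 1, by omega⟩, by omega,
              Or.inr ⟨by omega, Or.inr ⟨by omega, ⟨t - j + r, by omega⟩⟩⟩⟩)
      · -- a = 2
        simp only at ha hm1 hm2 hpar
        subst ha
        have hdom : ((2, m, n) : ℤ × ℤ × ℤ) ∈ IndexSetPlusOdd t ℓ :=
          Or.inr ⟨rfl, hm1, hm2, hpar⟩
        rw [hg2 m n hdom]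
        show memI t ℓ (t + 1) m ∧ pPlusOdd t (t + 1) m (n + 1)
        refine ⟨Or.inr ⟨rfl, hm1, hm2⟩, ?_⟩
        have hp0 : 0 ≤ (n + 1) % (2 * t) := Int.emod_nonneg _ (by omega)
        have hp2 : (n + 1) % (2 * t) < 2 * t := Int.emod_lt_of_pos _ (by omega)
        have hpp : (n + 1) % (2 * t) % 2 = (n + 1) % 2 := Int.emod_emod_of_dvd _ ⟨t, rfl⟩
        obtain ⟨c, hc⟩ := hpar
        unfold pPlusOdd
        generalize hP : (n + 1) % (2 * t) = P at hp0 hp2 hpp ⊢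
        rcases Int.even_or_odd m with ⟨r, hr⟩ | ⟨r, hr⟩
        · -- m even, n even, P odd
          have hop : Odd P := Int.odd_iff.mpr (by omega)
          have hns : ¬ sgnPlus t (t + 1) m := by
            rintro (⟨-, w, hw⟩ | ⟨h1, -⟩)
            · omega
            · exact h1 rfl
          rcases le_or_gt P (t - 1) with h | h
          · exact Or.inr (Or.inl ⟨hop, h, Or.inl ⟨rfl, hns⟩⟩)
          · exact Or.inr (Or.inr (Or.inr ⟨hop, by omega, Or.inl ⟨rfl, hns⟩⟩))
        · -- m odd, n odd, P even
          have hep : Even P := Int.even_iff.mpr (by omega)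
          have hsg : sgnPlus t (t + 1) m := Or.inl ⟨rfl, ⟨r, hr⟩⟩
          rcases le_or_gt P (t - 1) with h | h
          · exact Or.inl ⟨hep, h, Or.inl ⟨rfl, hsg⟩⟩
          · exact Or.inr (Or.inr (Or.inl ⟨hep, by omega, Or.inl ⟨rfl, hsg⟩⟩))
    · -- InjOn
      have key : ∀ a₀ m₀ n₀ : ℤ, ((a₀, m₀, n₀) : ℤ × ℤ × ℤ) ∈ IndexSetPlusOdd t ℓ →
          (a₀ = 2 ∧ g (a₀, m₀, n₀) = ((t + 1, m₀), n₀ + 1)) ∨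
          (a₀ = 1 ∧ ∃ i, i ≤ t ∧ g (a₀, m₀, n₀) = ((i, m₀), n₀ + t)) := by
        rintro a₀ m₀ n₀ (⟨h1, hm1, hm2, hpar⟩ | ⟨h1, hm1, hm2, hpar⟩)
        · simp only at h1 hm1 hm2 hpar
          subst h1
          obtain ⟨j, ⟨hj0, hj1, hjd⟩, -⟩ := exu_j t m₀ n₀ ht htodd hpar
          have hdom : ((1, m₀, n₀) : ℤ × ℤ × ℤ) ∈ IndexSetPlusOdd t ℓ :=
            Or.inl ⟨rfl, hm1, hm2, hpar⟩
          rcases le_or_gt (2 * j + 1) t with hb | hb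
          · exact Or.inr ⟨rfl, 2 * j + 1, hb, hg1a _ _ j hdom hj0 hj1 hjd hb⟩
          · exact Or.inr ⟨rfl, 2 * t - 2 * j, by omega,
              hg1b _ _ j hdom hj0 hj1 hjd (by omega)⟩
        · simp only at h1 hm1 hm2 hpar
          subst h1
          exact Or.inl ⟨rfl, hg2 _ _ (Or.inr ⟨rfl, hm1, hm2, hpar⟩)⟩
      rintro ⟨a, m, n⟩ hx ⟨b, m', n'⟩ hy hxy
      rcases key a m n hx with ⟨ha, hga⟩ | ⟨ha, i, hi, hga⟩ <;>
        rcases key b m' n' hy with ⟨hb, hgb⟩ | ⟨hb, i', hi', hgb⟩ <;>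
        rw [hga, hgb] at hxy <;>
        simp only [Prod.mk.injEq] at hxy ⊢ <;>
        omega
    · -- SurjOn
      rintro ⟨⟨i, i'⟩, u⟩ ⟨hmem, hpp⟩
      have hp0 : 0 ≤ u % (2 * t) := Int.emod_nonneg _ (by omega)
      have hp2 : u % (2 * t) < 2 * t := Int.emod_lt_of_pos _ (by omega)
      have hppu : u % (2 * t) % 2 = u % 2 := Int.emod_emod_of_dvd _ ⟨t, rfl⟩
      have hu : 2 * t * (u / (2 * t)) + u % (2 * t) = u := Int.mul_ediv_add_emod u (2 * t)
      set q : ℤ := u / (2 * t) with hqdef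
      unfold pPlusOdd at hpp
      simp only at hmem hpp
      generalize hP : u % (2 * t) = P at hp0 hp2 hppu hu hpp
      by_cases hi : i = t + 1
      · subst hi
        have h1 : 1 ≤ i' ∧ i' ≤ t * ℓ - 1 := by
          rcases hmem with h | h
          · exact absurd h.2.1 (by omega)
          · exact ⟨h.2.1, h.2.2⟩
        have hi'p : (P % 2 = 0 ∧ i' % 2 = 1) ∨ (P % 2 = 1 ∧ i' % 2 = 0) := by
          rcases hpp with ⟨he, hle, hor⟩ | ⟨ho, hle, hor⟩ | ⟨he, hle, hor⟩ | ⟨ho, hle, hor⟩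
          · rcases hor with ⟨-, hsg⟩ | ⟨hieq, -⟩
            · rcases hsg with ⟨-, hoi⟩ | ⟨hne, -⟩
              · exact Or.inl ⟨Int.even_iff.mp he, Int.odd_iff.mp hoi⟩
              · exact absurd rfl hne
            · omega
          · rcases hor with ⟨-, hsg⟩ | ⟨hieq, -⟩
            · refine Or.inr ⟨Int.odd_iff.mp ho, ?_⟩
              rcases Int.even_or_odd i' with hei | hoi
              · exact Int.even_iff.mp hei
              · exact absurd (Or.inl ⟨rfl, hoi⟩) hsg
            · omega
          · rcases hor with ⟨-, hsg⟩ | ⟨hieq, -⟩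
            · rcases hsg with ⟨-, hoi⟩ | ⟨hne, -⟩
              · exact Or.inl ⟨Int.even_iff.mp he, Int.odd_iff.mp hoi⟩
              · exact absurd rfl hne
            · omega
          · rcases hor with ⟨-, hsg⟩ | ⟨hieq, -⟩
            · refine Or.inr ⟨Int.odd_iff.mp ho, ?_⟩
              rcases Int.even_or_odd i' with hei | hoi
              · exact Int.even_iff.mp hei
              · exact absurd (Or.inl ⟨rfl, hoi⟩) hsg
            · omega
        have hdom : ((2, i', u - 1) : ℤ × ℤ × ℤ) ∈ IndexSetPlusOdd t ℓ := by
          refine Or.inr ⟨rfl, h1.1, h1.2, ?_⟩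
          show Even (i' + (u - 1))
          exact Int.even_iff.mpr (by omega)
        refine ⟨(2, i', u - 1), hdom, ?_⟩
        rw [hg2 _ _ hdom]
        have e2 : u - 1 + 1 = u := by ring
        rw [e2]
      · have h1 : 1 ≤ i ∧ i ≤ t ∧ 1 ≤ i' ∧ i' ≤ ℓ - 1 := by
          rcases hmem with h | h
          · exact h
          · exact absurd h.1 hi
        rcases hpp with ⟨he, hle, hor⟩ | ⟨ho, hle, hor⟩ | ⟨he, hle, hor⟩ | ⟨ho, hle, hor⟩
        · -- case (i): i = P + 1, j = r with P = 2r
          rcases hor with ⟨h2, -⟩ | ⟨hieq, hsg⟩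
          · exact absurd h2 hi
          obtain ⟨r, hr⟩ := he
          have hoi : Odd (i + i') := by
            rcases hsg with ⟨h2, -⟩ | ⟨-, h2⟩
            · exact absurd h2 hi
            · exact h2
          obtain ⟨w, hw⟩ := hoi
          obtain ⟨v, hv⟩ : Even i' := Int.even_iff.mpr (by omega)
          have hdom : ((1, i', u - t) : ℤ × ℤ × ℤ) ∈ IndexSetPlusOdd t ℓ := by
            refine Or.inl ⟨rfl, h1.2.2.1, h1.2.2.2, ?_⟩
            show Odd (i' + (u - t))
            exact Int.odd_iff.mpr (by omega)
          have hdvd : (2 * t) ∣ (t * i' + (u - t) + t - 2 * r) :=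
            ⟨v + q, by linear_combination t * hv - hu + hr⟩
          refine ⟨(1, i', u - t), hdom, ?_⟩
          rw [hg1a _ _ r hdom (by omega) (by omega) hdvd (by omega)]
          have e1 : 2 * r + 1 = i := by omega
          have e2 : u - t + t = u := by ring
          rw [e1, e2]
        · -- case (ii): i = t - P, j = r + s + 1 with P = 2r+1
          rcases hor with ⟨h2, -⟩ | ⟨hieq, hsg⟩
          · exact absurd h2 hi
          obtain ⟨r, hr⟩ := ho
          have hoi : Odd (i + i') := by
            rcases hsg with ⟨h2, -⟩ | ⟨-, h2⟩
            · exact absurd h2 hi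
            · exact h2
          obtain ⟨w, hw⟩ := hoi
          obtain ⟨v, hv⟩ : Odd i' := Int.odd_iff.mpr (by omega)
          have hdom : ((1, i', u - t) : ℤ × ℤ × ℤ) ∈ IndexSetPlusOdd t ℓ := by
            refine Or.inl ⟨rfl, h1.2.2.1, h1.2.2.2, ?_⟩
            show Odd (i' + (u - t))
            exact Int.odd_iff.mpr (by omega)
          have hdvd : (2 * t) ∣ (t * i' + (u - t) + t - 2 * (r + s + 1)) :=
            ⟨v + q, by linear_combination t * hv - hu + hr + hs⟩
          refine ⟨(1, i', u - t), hdom, ?_⟩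
          rw [hg1b _ _ (r + s + 1) hdom (by omega) (by omega) hdvd (by omega)]
          have e1 : 2 * t - 2 * (r + s + 1) = i := by omega
          have e2 : u - t + t = u := by ring
          rw [e1, e2]
        · -- case (iii): i = 2t - P, j = r with P = 2r
          rcases hor with ⟨h2, -⟩ | ⟨hieq, hsg⟩
          · exact absurd h2 hi
          obtain ⟨r, hr⟩ := he
          have hei : Even (i + i') := by
            rcases Int.even_or_odd (i + i') with h2 | h2
            · exact h2
            · exact absurd (Or.inr ⟨hi, h2⟩) hsg
          obtain ⟨w, hw⟩ := hei
          obtain ⟨v, hv⟩ : Even i' := Int.even_iff.mpr (by omega)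
          have hdom : ((1, i', u - t) : ℤ × ℤ × ℤ) ∈ IndexSetPlusOdd t ℓ := by
            refine Or.inl ⟨rfl, h1.2.2.1, h1.2.2.2, ?_⟩
            show Odd (i' + (u - t))
            exact Int.odd_iff.mpr (by omega)
          have hdvd : (2 * t) ∣ (t * i' + (u - t) + t - 2 * r) :=
            ⟨v + q, by linear_combination t * hv - hu + hr⟩
          refine ⟨(1, i', u - t), hdom, ?_⟩
          rw [hg1b _ _ r hdom (by omega) (by omega) hdvd (by omega)]
          have e1 : 2 * t - 2 * r = i := by omega
          have e2 : u - t + t = u := by ring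
          rw [e1, e2]
        · -- case (iv): i = P + 1 - t, j = r - s with P = 2r+1
          rcases hor with ⟨h2, -⟩ | ⟨hieq, hsg⟩
          · exact absurd h2 hi
          obtain ⟨r, hr⟩ := ho
          have hei : Even (i + i') := by
            rcases Int.even_or_odd (i + i') with h2 | h2
            · exact h2
            · exact absurd (Or.inr ⟨hi, h2⟩) hsg
          obtain ⟨w, hw⟩ := hei
          obtain ⟨v, hv⟩ : Odd i' := Int.odd_iff.mpr (by omega)
          have hdom : ((1, i', u - t) : ℤ × ℤ × ℤ) ∈ IndexSetPlusOdd t ℓ := by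
            refine Or.inl ⟨rfl, h1.2.2.1, h1.2.2.2, ?_⟩
            show Odd (i' + (u - t))
            exact Int.odd_iff.mpr (by omega)
          have hdvd : (2 * t) ∣ (t * i' + (u - t) + t - 2 * (r - s)) :=
            ⟨v + q + 1, by linear_combination t * hv - hu + hr - hs⟩
          refine ⟨(1, i', u - t), hdom, ?_⟩
          rw [hg1a _ _ (r - s) hdom (by omega) (by omega) hdvd (by omega)]
          have e1 : 2 * (r - s) + 1 = i := by omega
          have e2 : u - t + t = u := by ring
          rw [e1, e2]
end

section
/- (Lemma on the embedding map g', odd case, part (ii).) Let t ≥ 1 be odd and ℓ ≥ 2. For every (1,m,u) ∈ 𝓘'_{ℓ+} there is a unique j ∈ {0,1,…,t−1} with m + u ≡ 2j/t (mod 2ℤ). Define g' : 𝓘'_{ℓ+} → 𝐈 × (1/t)ℤ by: g'(2,m,u) = ((t+1,m), u); and g'(1,m,u) = ((2j+1,m), u) if 0 ≤ j ≤ (t−1)/2, g'(1,m,u) = ((2t−2j,m), u) if (t+1)/2 ≤ j ≤ t−1, where j is the unique index above. Then g' is a bijection from 𝓘'_{ℓ+} onto {(𝐢,u) ∈ 𝐈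 × (1/t)ℤ : (𝐢,u) satisfies p_+}. -/
/- We encode `u ∈ (1/t)ℤ` by the integer `n = t·u`.  A triple `(a, m, u)` of the index
set `𝓘_ℓ` is encoded as `(a, m, n) : ℤ × ℤ × ℤ`, and a pair `(𝐢, u) = ((i, i'), u)` of
`𝐈 × (1/t)ℤ` is encoded as `((i, i'), n) : (ℤ × ℤ) × ℤ`. -/

/-- The set `𝓘'_{ℓ+}` of triples of `𝓘_ℓ` satisfying the parity condition `P'_+`
(for the rank-2 Cartan matrix `M_t` with `t` odd): `m + tu` even for `a = 1`,
`m + tu` odd for `a = 2`. -/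
def IndexSetPlusOdd' (t ℓ : ℤ) : Set (ℤ × ℤ × ℤ) :=
  {x | (x.1 = 1 ∧ 1 ≤ x.2.1 ∧ x.2.1 ≤ ℓ - 1 ∧ Even (x.2.1 + x.2.2)) ∨
       (x.1 = 2 ∧ 1 ≤ x.2.1 ∧ x.2.1 ≤ t * ℓ - 1 ∧ Odd (x.2.1 + x.2.2))}

private lemma existsUnique_j' (t s : ℤ) (ht : 1 ≤ t) (hs : Even s) :
    ∃! j : ℤ, 0 ≤ j ∧ j ≤ t - 1 ∧ (2 * t) ∣ (s - 2 * j) := by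
  obtain ⟨c, hc⟩ := hs
  have ht0 : 0 < t := by omega
  have h0 : 0 ≤ c % t := Int.emod_nonneg c (by omega)
  have h1 : c % t < t := Int.emod_lt_of_pos c ht0
  have hmd : c % t + t * (c / t) = c := Int.emod_add_mul_ediv c t
  refine ⟨c % t, ⟨h0, by omega, ⟨c / t, by linear_combination hc - 2 * hmd⟩⟩, ?_⟩
  rintro y ⟨hy0, hy1, k, hk⟩
  have hdvd : y - c % t = t * ((c / t) - k) := by
    have h2 : 2 * (y - c % t) = 2 * (t * ((c / t) - k)) := by
      linear_combination hc - hk - 2 * hmd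
    linarith
  have : y - c % t = 0 := by
    refine Int.eq_zero_of_abs_lt_dvd ⟨(c / t) - k, hdvd⟩ ?_
    rw [abs_lt]; omega
  omega

private lemma emod_eq'' (T n r : ℤ) (h0 : 0 ≤ r) (h1 : r < T) (k : ℤ)
    (hk : n = T * k + r) : n % T = r := by
  rw [hk, add_comm, Int.add_mul_emod_self_left, Int.emod_eq_of_lt h0 h1]

/-- Lemma on the embedding map `g'`, odd case, part (ii):  for every `(1, m, u) ∈ 𝓘'_{ℓ+}`
there is a unique `j ∈ {0, …, t−1}` with `m + u ≡ 2j/t (mod 2ℤ)` (encoded as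
`2t ∣ t·m + n − 2j` for `u = n/t`), and any map `g'` satisfying the defining clauses
`g'(2,m,u) = ((t+1,m), u)` and `g'(1,m,u) = ((2j+1,m), u)` for `0 ≤ j ≤ (t−1)/2`,
`g'(1,m,u) = ((2t−2j,m), u)` for `(t+1)/2 ≤ j ≤ t−1`, is a bijection from `𝓘'_{ℓ+}`
onto `{(𝐢,u) : p_+}`. -/
theorem embedding_g'_odd_bijective (t ℓ : ℤ) (ht : 1 ≤ t) (htodd : Odd t) (hℓ : 2 ≤ ℓ) :
    (∀ m n : ℤ, ((1, m, n) : ℤ × ℤ × ℤ) ∈ IndexSetPlusOdd' t ℓ →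
      ∃! j : ℤ, 0 ≤ j ∧ j ≤ t - 1 ∧ (2 * t) ∣ (t * m + n - 2 * j)) ∧
    (∀ g' : ℤ × ℤ × ℤ → (ℤ × ℤ) × ℤ,
      (∀ m n : ℤ, ((2, m, n) : ℤ × ℤ × ℤ) ∈ IndexSetPlusOdd' t ℓ →
        g' (2, m, n) = ((t + 1, m), n)) →
      (∀ m n j : ℤ, ((1, m, n) : ℤ × ℤ × ℤ) ∈ IndexSetPlusOdd' t ℓ →
        0 ≤ j → j ≤ t - 1 → (2 * t) ∣ (t * m + n - 2 * j) → 2 * j + 1 ≤ t →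
        g' (1, m, n) = ((2 * j + 1, m), n)) →
      (∀ m n j : ℤ, ((1, m, n) : ℤ × ℤ × ℤ) ∈ IndexSetPlusOdd' t ℓ →
        0 ≤ j → j ≤ t - 1 → (2 * t) ∣ (t * m + n - 2 * j) → t + 1 ≤ 2 * j →
        g' (1, m, n) = ((2 * t - 2 * j, m), n)) →
      Set.BijOn g' (IndexSetPlusOdd' t ℓ) (targetSetOdd t ℓ)) := by
  obtain ⟨α, hα⟩ := htodd
  have ht0 : (0:ℤ) < 2 * t := by omega
  have part1 : ∀ m n : ℤ, ((1, m, n) : ℤ × ℤ × ℤ) ∈ IndexSetPlusOdd' t ℓ →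
      ∃! j : ℤ, 0 ≤ j ∧ j ≤ t - 1 ∧ (2 * t) ∣ (t * m + n - 2 * j) := by
    intro m n hmem
    have hev : Even (m + n) := by
      rcases hmem with ⟨-, -, -, h⟩ | ⟨h2, -⟩
      · exact h
      · exact absurd (show (1:ℤ) = 2 from h2) (by norm_num)
    have hs : Even (t * m + n) := by
      rcases Int.even_or_odd m with ⟨b, hb⟩ | ⟨b, hb⟩
      · obtain ⟨c, hcn⟩ : Even n := by
          rcases hev with ⟨c, hc⟩; exact ⟨c - b, by omega⟩
        exact ⟨t * b + c, by linear_combination t * hb + hcn⟩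
      · obtain ⟨c, hcn⟩ : Odd n := by
          rcases hev with ⟨c, hc⟩; exact ⟨c - b - 1, by omega⟩
        exact ⟨t * b + α + 1 + c, by linear_combination t * hb + hcn + hα⟩
    exact existsUnique_j' t (t * m + n) ht hs
  refine ⟨part1, ?_⟩
  intro g' hg2 hg1a hg1b
  -- key fact about the image of (1, m, n)
  have key1 : ∀ m n : ℤ, ((1, m, n) : ℤ × ℤ × ℤ) ∈ IndexSetPlusOdd' t ℓ →
      g' (1, m, n) ∈ targetSetOdd t ℓ ∧ (g' (1, m, n)).1.1 ≤ t ∧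
        (g' (1, m, n)).1.2 = m ∧ (g' (1, m, n)).2 = n := by
    intro m n hmem
    obtain ⟨j, ⟨hj0, hj1, k, hk⟩, -⟩ := part1 m n hmem
    have hev : Even (m + n) := by
      rcases hmem with ⟨-, -, -, h⟩ | ⟨h2, -⟩
      · exact h
      · exact absurd (show (1:ℤ) = 2 from h2) (by norm_num)
    have hm1 : 1 ≤ m := by
      rcases hmem with ⟨-, h, -, -⟩ | ⟨h2, -⟩
      · exact h
      · exact absurd (show (1:ℤ) = 2 from h2) (by norm_num)
    have hm2 : m ≤ ℓ - 1 := by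
      rcases hmem with ⟨-, -, h, -⟩ | ⟨h2, -⟩
      · exact h
      · exact absurd (show (1:ℤ) = 2 from h2) (by norm_num)
    rcases Int.even_or_odd m with ⟨b, hb⟩ | ⟨b, hb⟩
    · -- m even
      have hp : n % (2 * t) = 2 * j := by
        refine emod_eq'' (2 * t) n (2 * j) (by omega) (by omega) (k - b) ?_
        linear_combination hk - t * hb
      rcases le_or_gt (2 * j + 1) t with hle | hgt
      · rw [hg1a m n j hmem hj0 hj1 ⟨k, hk⟩ hle]
        refine ⟨⟨show memI t ℓ (2 * j + 1) m from Or.inl ⟨by omega, hle, hm1, hm2⟩, ?_⟩,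
          hle, rfl, rfl⟩
        show pPlusOdd t (2 * j + 1) m n
        simp only [pPlusOdd, sgnPlus, hp, Int.even_iff, Int.odd_iff, true_and, and_true, ne_eq]
        omega
      · have hgt' : t + 1 ≤ 2 * j := by omega
        rw [hg1b m n j hmem hj0 hj1 ⟨k, hk⟩ hgt']
        refine ⟨⟨show memI t ℓ (2 * t - 2 * j) m from Or.inl ⟨by omega, by omega, hm1, hm2⟩, ?_⟩,
          show 2 * t - 2 * j ≤ t by omega, rfl, rfl⟩
        show pPlusOdd t (2 * t - 2 * j) m n
        simp only [pPlusOdd, sgnPlus, hp, Int.even_iff, Int.odd_iff, true_and, and_true, ne_eq]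
        omega
    · -- m odd
      rcases le_or_gt (2 * j + 1) t with hle | hgt
      · have hp : n % (2 * t) = 2 * j + t := by
          refine emod_eq'' (2 * t) n (2 * j + t) (by omega) (by omega) (k - b - 1) ?_
          linear_combination hk - t * hb
        rw [hg1a m n j hmem hj0 hj1 ⟨k, hk⟩ hle]
        refine ⟨⟨show memI t ℓ (2 * j + 1) m from Or.inl ⟨by omega, hle, hm1, hm2⟩, ?_⟩,
          hle, rfl, rfl⟩
        show pPlusOdd t (2 * j + 1) m n
        simp only [pPlusOdd, sgnPlus, hp, Int.even_iff, Int.odd_iff, true_and, and_true, ne_eq]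
        omega
      · have hgt' : t + 1 ≤ 2 * j := by omega
        have hp : n % (2 * t) = 2 * j - t := by
          refine emod_eq'' (2 * t) n (2 * j - t) (by omega) (by omega) (k - b) ?_
          linear_combination hk - t * hb
        rw [hg1b m n j hmem hj0 hj1 ⟨k, hk⟩ hgt']
        refine ⟨⟨show memI t ℓ (2 * t - 2 * j) m from Or.inl ⟨by omega, by omega, hm1, hm2⟩, ?_⟩,
          show 2 * t - 2 * j ≤ t by omega, rfl, rfl⟩
        show pPlusOdd t (2 * t - 2 * j) m n
        simp only [pPlusOdd, sgnPlus, hp, Int.even_iff, Int.odd_iff, true_and, and_true, ne_eq]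
        omega
  -- key fact about the image of (2, m, n)
  have key2 : ∀ m n : ℤ, ((2, m, n) : ℤ × ℤ × ℤ) ∈ IndexSetPlusOdd' t ℓ →
      (((t + 1, m), n) : (ℤ × ℤ) × ℤ) ∈ targetSetOdd t ℓ := by
    intro m n hmem
    obtain ⟨h2, -⟩ | ⟨-, hm1', hm2', hodd'⟩ := hmem
    · exact absurd (show (2:ℤ) = 1 from h2) (by norm_num)
    have hm1 : 1 ≤ m := hm1'
    have hm2 : m ≤ t * ℓ - 1 := hm2'
    have hodd : Odd (m + n) := hodd'
    refine ⟨show memI t ℓ (t + 1) m from Or.inr ⟨rfl, hm1, hm2⟩, ?_⟩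
    show pPlusOdd t (t + 1) m n
    simp only [pPlusOdd, sgnPlus, true_and, and_true, ne_eq]
    have hd2 : (2:ℤ) ∣ (n - n % (2 * t)) :=
      ⟨t * (n / (2 * t)), by linear_combination - Int.emod_add_mul_ediv n (2 * t)⟩
    have hp0 : 0 ≤ n % (2 * t) := Int.emod_nonneg n (by omega)
    have hp1 : n % (2 * t) < 2 * t := Int.emod_lt_of_pos n ht0
    set p := n % (2 * t) with hpdef
    rw [Int.odd_iff] at hodd
    simp only [Int.even_iff, Int.odd_iff]
    omega
  have hmaps : Set.MapsTo g' (IndexSetPlusOdd' t ℓ) (targetSetOdd t ℓ) := by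
    rintro ⟨a, m, n⟩ hx
    rcases hx with ⟨ha, hx⟩ | ⟨ha, hx⟩
    · obtain rfl : a = 1 := ha
      exact (key1 m n (Or.inl ⟨rfl, hx⟩)).1
    · obtain rfl : a = 2 := ha
      rw [hg2 m n (Or.inr ⟨rfl, hx⟩)]
      exact key2 m n (Or.inr ⟨rfl, hx⟩)
  have hinj : Set.InjOn g' (IndexSetPlusOdd' t ℓ) := by
    rintro ⟨a, m, n⟩ hx ⟨a', m', n'⟩ hy heq
    rcases hx with ⟨ha, hx⟩ | ⟨ha, hx⟩ <;> rcases hy with ⟨ha', hy⟩ | ⟨ha', hy⟩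
    · obtain rfl : a = 1 := ha
      obtain rfl : a' = 1 := ha'
      have k1 := key1 m n (Or.inl ⟨rfl, hx⟩)
      have k2 := key1 m' n' (Or.inl ⟨rfl, hy⟩)
      have em : m = m' := by rw [← k1.2.2.1, ← k2.2.2.1, heq]
      have en : n = n' := by rw [← k1.2.2.2, ← k2.2.2.2, heq]
      rw [em, en]
    · obtain rfl : a = 1 := ha
      obtain rfl : a' = 2 := ha'
      have k1 := (key1 m n (Or.inl ⟨rfl, hx⟩)).2.1
      rw [heq, hg2 m' n' (Or.inr ⟨rfl, hy⟩)] at k1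
      have : t + 1 ≤ t := k1
      omega
    · obtain rfl : a = 2 := ha
      obtain rfl : a' = 1 := ha'
      have k1 := (key1 m' n' (Or.inl ⟨rfl, hy⟩)).2.1
      rw [← heq, hg2 m n (Or.inr ⟨rfl, hx⟩)] at k1
      have : t + 1 ≤ t := k1
      omega
    · obtain rfl : a = 2 := ha
      obtain rfl : a' = 2 := ha'
      rw [hg2 m n (Or.inr ⟨rfl, hx⟩), hg2 m' n' (Or.inr ⟨rfl, hy⟩)] at heq
      simp only [Prod.mk.injEq] at heq
      obtain ⟨⟨-, e1⟩, e2⟩ := heq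
      rw [e1, e2]
  have hsurj : Set.SurjOn g' (IndexSetPlusOdd' t ℓ) (targetSetOdd t ℓ) := by
    rintro ⟨⟨i, i'⟩, n⟩ hz
    obtain ⟨hmem', hpp'⟩ := hz
    have hmem : memI t ℓ i i' := hmem'
    have hpp : pPlusOdd t i i' n := hpp'
    clear hmem' hpp'
    have hd2 : (2:ℤ) ∣ (n - n % (2 * t)) :=
      ⟨t * (n / (2 * t)), by linear_combination - Int.emod_add_mul_ediv n (2 * t)⟩
    have hp0 : 0 ≤ n % (2 * t) := Int.emod_nonneg n (by omega)
    have hp1 : n % (2 * t) < 2 * t := Int.emod_lt_of_pos n ht0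
    have hq0 : n = 2 * t * (n / (2 * t)) + n % (2 * t) := by
      linear_combination - Int.emod_add_mul_ediv n (2 * t)
    simp only [pPlusOdd, sgnPlus] at hpp
    set p := n % (2 * t) with hpdef
    by_cases hi : i = t + 1
    · subst hi
      obtain ⟨-, habs, -⟩ | ⟨-, h1, h2⟩ := hmem
      · omega
      have hoddsum : Odd (i' + n) := by
        rw [Int.odd_iff]
        simp only [Int.even_iff, Int.odd_iff, true_and, and_true] at hpp
        omega
      have hmem2 : ((2, i', n) : ℤ × ℤ × ℤ) ∈ IndexSetPlusOdd' t ℓ :=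
        Or.inr ⟨rfl, h1, h2, hoddsum⟩
      exact ⟨(2, i', n), hmem2, hg2 i' n hmem2⟩
    · obtain ⟨hi1, hi2, hi'1, hi'2⟩ | ⟨habs, -⟩ := hmem
      swap
      · exact absurd habs hi
      simp only [Int.even_iff, Int.odd_iff] at hpp
      rcases hpp with ⟨hpe, hle, hv⟩ | ⟨hpo, hle, hv⟩ | ⟨hpe, hge, hv⟩ | ⟨hpo, hge, hv⟩
      · -- clause (i) : p even, p ≤ t - 1, i = p + 1, sign +
        rcases hv with ⟨hit, -⟩ | ⟨hieq, hs⟩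
        · exact absurd hit hi
        have hi'p : i' % 2 = 0 := by omega
        obtain ⟨jj, hjj⟩ : ∃ jj, p = 2 * jj := ⟨p / 2, by omega⟩
        obtain ⟨c, hc⟩ : ∃ c, i' = 2 * c := ⟨i' / 2, by omega⟩
        have hevsum : Even (i' + n) := Int.even_iff.mpr (by omega)
        have hmem1 : ((1, i', n) : ℤ × ℤ × ℤ) ∈ IndexSetPlusOdd' t ℓ :=
          Or.inl ⟨rfl, hi'1, hi'2, hevsum⟩
        have hdvd : (2 * t) ∣ (t * i' + n - 2 * jj) :=
          ⟨c + n / (2 * t), by linear_combination t * hc + hq0 + hjj⟩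
        have hgeq := hg1a i' n jj hmem1 (by omega) (by omega) hdvd (by omega)
        refine ⟨(1, i', n), hmem1, ?_⟩
        rw [hgeq]
        have : 2 * jj + 1 = i := by omega
        rw [this]
      · -- clause (ii) : p odd, p ≤ t - 1, i = t - p, sign +
        rcases hv with ⟨hit, -⟩ | ⟨hieq, hs⟩
        · exact absurd hit hi
        have hi'p : i' % 2 = 1 := by omega
        obtain ⟨jj, hjj⟩ : ∃ jj, p = 2 * jj + 1 := ⟨p / 2, by omega⟩
        obtain ⟨c, hc⟩ : ∃ c, i' = 2 * c + 1 := ⟨i' / 2, by omega⟩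
        have hevsum : Even (i' + n) := Int.even_iff.mpr (by omega)
        have hmem1 : ((1, i', n) : ℤ × ℤ × ℤ) ∈ IndexSetPlusOdd' t ℓ :=
          Or.inl ⟨rfl, hi'1, hi'2, hevsum⟩
        have hdvd : (2 * t) ∣ (t * i' + n - 2 * (α + jj + 1)) :=
          ⟨c + n / (2 * t), by linear_combination t * hc + hq0 + hjj + hα⟩
        have hgeq := hg1b i' n (α + jj + 1) hmem1 (by omega) (by omega) hdvd (by omega)
        refine ⟨(1, i', n), hmem1, ?_⟩
        rw [hgeq]
        have : 2 * t - 2 * (α + jj + 1) = i := by omega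
        rw [this]
      · -- clause (iii) : p even, t ≤ p, i = 2t - p, sign -
        rcases hv with ⟨hit, -⟩ | ⟨hieq, hs⟩
        · exact absurd hit hi
        have hi'p : i' % 2 = 0 := by omega
        obtain ⟨jj, hjj⟩ : ∃ jj, p = 2 * jj := ⟨p / 2, by omega⟩
        obtain ⟨c, hc⟩ : ∃ c, i' = 2 * c := ⟨i' / 2, by omega⟩
        have hevsum : Even (i' + n) := Int.even_iff.mpr (by omega)
        have hmem1 : ((1, i', n) : ℤ × ℤ × ℤ) ∈ IndexSetPlusOdd' t ℓ :=
          Or.inl ⟨rfl, hi'1, hi'2, hevsum⟩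
        have hdvd : (2 * t) ∣ (t * i' + n - 2 * jj) :=
          ⟨c + n / (2 * t), by linear_combination t * hc + hq0 + hjj⟩
        have hgeq := hg1b i' n jj hmem1 (by omega) (by omega) hdvd (by omega)
        refine ⟨(1, i', n), hmem1, ?_⟩
        rw [hgeq]
        have : 2 * t - 2 * jj = i := by omega
        rw [this]
      · -- clause (iv) : p odd, t ≤ p, i = p + 1 - t, sign -
        rcases hv with ⟨hit, -⟩ | ⟨hieq, hs⟩
        · exact absurd hit hi
        have hi'p : i' % 2 = 1 := by omega
        obtain ⟨jj, hjj⟩ : ∃ jj, p = 2 * jj + 1 := ⟨p / 2, by omega⟩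
        obtain ⟨c, hc⟩ : ∃ c, i' = 2 * c + 1 := ⟨i' / 2, by omega⟩
        have hevsum : Even (i' + n) := Int.even_iff.mpr (by omega)
        have hmem1 : ((1, i', n) : ℤ × ℤ × ℤ) ∈ IndexSetPlusOdd' t ℓ :=
          Or.inl ⟨rfl, hi'1, hi'2, hevsum⟩
        have hdvd : (2 * t) ∣ (t * i' + n - 2 * (jj - α)) :=
          ⟨c + n / (2 * t) + 1, by linear_combination t * hc + hq0 + hjj - hα⟩
        have hgeq := hg1a i' n (jj - α) hmem1 (by omega) (by omega) hdvd (by omega)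
        refine ⟨(1, i', n), hmem1, ?_⟩
        rw [hgeq]
        have : 2 * (jj - α) + 1 = i := by omega
        rw [this]
  exact ⟨hmaps, hinj, hsurj⟩
end

section
/- (Lemma on the embedding map g, even case, part (i).) Let t ≥ 2 be even and ℓ ≥ 2. For every (1,m,v) ∈ 𝓘_{ℓ+} there is a unique j ∈ {0,1,…,t−1} with m + (v+1) ≡ 2j/t (mod 2ℤ). Define g : 𝓘_{ℓ+} → 𝐈 × (1/t)ℤ by: g(2,m,v) = ((t+1,m), v + 1/t); and g(1,m,v) = ((2j+1,m), v+1) if 0 ≤ j ≤ t/2 − 1, g(1,m,v) = ((2t−2j,m), v+1) if t/2 ≤ j ≤ t−1, where j is the unique index above. Then g is a bijection from 𝓘_{ℓ+} onto {(𝐢,u) ∈ 𝐈 × (1/t)ℤ : (𝐢,u) satisfies p_+}. -/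
/- We encode `u ∈ (1/t)ℤ` by the integer `n = t·u`.  A triple `(a, m, u)` of the index
set `𝓘_ℓ` is encoded as `(a, m, n) : ℤ × ℤ × ℤ`, and a pair `(𝐢, u) = ((i, i'), u)` of
`𝐈 × (1/t)ℤ` is encoded as `((i, i'), n) : (ℤ × ℤ) × ℤ`. -/

/-- The set `𝓘_{ℓ+}` of triples of `𝓘_ℓ` satisfying the parity condition `P_+`
(for the rank-2 Cartan matrix `M_t` with `t` even): `tu` even for `a = 1`,
`m + tu` even for `a = 2`. -/
def IndexSetPlusEven (t ℓ : ℤ) : Set (ℤ × ℤ × ℤ) :=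
  {x | (x.1 = 1 ∧ 1 ≤ x.2.1 ∧ x.2.1 ≤ ℓ - 1 ∧ Even x.2.2) ∨
       (x.1 = 2 ∧ 1 ≤ x.2.1 ∧ x.2.1 ≤ t * ℓ - 1 ∧ Even (x.2.1 + x.2.2))}

/-- The condition `p_+` on a pair `(𝐢, u) = ((i, i'), n/t)`, for `t` even; here
`p = n % (2t)` is the unique `p ∈ {0, …, 2t−1}` with `u ≡ p/t (mod 2ℤ)`. -/
def pPlusEven (t i i' n : ℤ) : Prop :=
  (Even (n % (2 * t)) ∧ n % (2 * t) ≤ t - 1 ∧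
    ((i = t + 1 ∧ sgnPlus t i i') ∨
      ((i = n % (2 * t) + 1 ∨ i = t - n % (2 * t)) ∧ sgnPlus t i i'))) ∨
  (Even (n % (2 * t)) ∧ t ≤ n % (2 * t) ∧
    ((i = t + 1 ∧ sgnPlus t i i') ∨
      ((i = n % (2 * t) + 1 - t ∨ i = 2 * t - n % (2 * t)) ∧ ¬ sgnPlus t i i'))) ∨
  (Odd (n % (2 * t)) ∧ i = t + 1 ∧ ¬ sgnPlus t i i')

/-- The set `{(𝐢, u) ∈ 𝐈 × (1/t)ℤ : (𝐢, u) satisfies p_+}`, for `t` even. -/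
def targetSetEven (t ℓ : ℤ) : Set ((ℤ × ℤ) × ℤ) :=
  {x | memI t ℓ x.1.1 x.1.2 ∧ pPlusEven t x.1.1 x.1.2 x.2}

private lemma eq_zero_of_dvd_small' {t x : ℤ} (ht : 0 < t) (h : t ∣ x) (h1 : -t < x) (h2 : x < t) :
    x = 0 := by
  obtain ⟨k, rfl⟩ := h
  rcases lt_trichotomy k 0 with hk | hk | hk
  · nlinarith
  · simp [hk]
  · nlinarith

private lemma eq_or_of_dvd_small' {t x : ℤ} (ht : 0 < t) (h : t ∣ x) (h1 : -t < x) (h2 : x < 2 * t) :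
    x = 0 ∨ x = t := by
  obtain ⟨k, rfl⟩ := h
  have hk : k = 0 ∨ k = 1 := by
    rcases lt_trichotomy k 0 with hk | hk | hk
    · nlinarith
    · omega
    · rcases lt_trichotomy k 1 with hk1 | hk1 | hk1 <;> [omega; omega; nlinarith]
  rcases hk with rfl | rfl
  · left; ring
  · right; ring

private lemma emod_basic' (t n : ℤ) (ht : 0 < t) :
    0 ≤ n % (2 * t) ∧ n % (2 * t) < 2 * t ∧ (∃ q, n - n % (2 * t) = 2 * t * q) ∧
      n % 2 = (n % (2 * t)) % 2 := by
  have h2t : (0:ℤ) < 2 * t := by linarith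
  refine ⟨Int.emod_nonneg n (by omega), Int.emod_lt_of_pos n h2t, ⟨n / (2*t), ?_⟩, ?_⟩
  · have := Int.mul_ediv_add_emod n (2*t)
    linarith
  · exact (Int.emod_emod_of_dvd n ⟨t, by ring⟩).symm

private lemma exists_unique_j' (t : ℤ) (ht : 2 ≤ t) (hteven : Even t) (m n : ℤ) (hn : Even n) :
    ∃! j : ℤ, 0 ≤ j ∧ j ≤ t - 1 ∧ (2 * t) ∣ (t * m + n + t - 2 * j) := by
  obtain ⟨t2, ht2⟩ := hteven
  obtain ⟨n2, hn2⟩ := hn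
  set c := t2 * m + n2 + t2 with hc
  have h := Int.mul_ediv_add_emod c t
  have hm0 : 0 ≤ c % t := Int.emod_nonneg c (by omega)
  have hm1 : c % t < t := Int.emod_lt_of_pos c (by omega)
  refine ⟨c % t, ⟨hm0, by omega, ⟨c / t, ?_⟩⟩, ?_⟩
  · subst ht2 hn2
    linear_combination (-2 : ℤ) * h
  · rintro j' ⟨hj0, hj1, k, hk⟩
    have key : 2 * (c % t - j') = 2 * (t * (k - c / t)) := by
      subst ht2 hn2
      linear_combination hk + 2 * h
    set d := k - c / t with hd
    have key2 : c % t - j' = t * d := by omega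
    rcases lt_trichotomy d 0 with hdd | hdd | hdd
    · nlinarith [mul_le_mul_of_nonneg_left (show d ≤ -1 by omega) (show (0:ℤ) ≤ t by omega)]
    · rw [hdd, mul_zero] at key2; omega
    · nlinarith [mul_le_mul_of_nonneg_left (show 1 ≤ d by omega) (show (0:ℤ) ≤ t by omega)]

set_option maxHeartbeats 2000000 in
private lemma mapsTo_g (t ℓ : ℤ) (ht : 2 ≤ t) (t2 : ℤ) (ht2 : t = t2 + t2) (hℓ : 2 ≤ ℓ)
    (g : ℤ × ℤ × ℤ → (ℤ × ℤ) × ℤ)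
    (hg2 : ∀ m n : ℤ, ((2, m, n) : ℤ × ℤ × ℤ) ∈ IndexSetPlusEven t ℓ →
        g (2, m, n) = ((t + 1, m), n + 1))
    (hG : ∀ m n : ℤ, ((1, m, n) : ℤ × ℤ × ℤ) ∈ IndexSetPlusEven t ℓ →
      ∃ j : ℤ, 0 ≤ j ∧ j ≤ t - 1 ∧ (2 * t) ∣ (t * m + n + t - 2 * j) ∧
        ((2 * j + 2 ≤ t ∧ g (1, m, n) = ((2 * j + 1, m), n + t)) ∨
         (t ≤ 2 * j ∧ g (1, m, n) = ((2 * t - 2 * j, m), n + t)))) :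
    Set.MapsTo g (IndexSetPlusEven t ℓ) (targetSetEven t ℓ) := by
  rintro ⟨a, m, n⟩ hx
  have hx' := hx
  simp only [IndexSetPlusEven, Set.mem_setOf_eq] at hx'
  rcases hx' with ⟨rfl, hm1, hm2, hn⟩ | ⟨rfl, hm1, hm2, hn⟩
  · -- a = 1
    obtain ⟨j, hj0, hj1, ⟨q, hq⟩, hcase⟩ := hG m n hx
    obtain ⟨p0, p1, ⟨q', hq'⟩, ppar⟩ := emod_basic' t (n + t) (by omega)
    rw [Int.even_iff] at hn
    have hrel : (n + t) % (2 * t) - 2 * j + t * m = 2 * t * (q - q') := by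
      linear_combination hq - hq'
    rcases Int.even_or_odd m with ⟨k, hk⟩ | ⟨k, hk⟩
    · subst hk
      have hpe : (n + t) % (2 * t) - 2 * j = 0 :=
        eq_zero_of_dvd_small' (show (0:ℤ) < 2 * t by omega)
          ⟨q - q' - k, by linear_combination hrel⟩ (by omega) (by omega)
      rcases hcase with ⟨hle, hgv⟩ | ⟨hge, hgv⟩ <;> rw [hgv] <;>
        simp only [targetSetEven, Set.mem_setOf_eq, memI, pPlusEven, sgnPlus,
          Int.even_iff, Int.odd_iff, ne_eq, true_and, and_true, not_true, not_false_iff,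
          false_and, and_false, or_false, false_or] <;> omega
    · subst hk
      have hpt : (n + t) % (2 * t) - 2 * j + t = 0 ∨ (n + t) % (2 * t) - 2 * j + t = 2 * t :=
        eq_or_of_dvd_small' (show (0:ℤ) < 2 * t by omega)
          ⟨q - q' - k, by linear_combination hrel⟩ (by omega) (by omega)
      rcases hcase with ⟨hle, hgv⟩ | ⟨hge, hgv⟩ <;> rw [hgv] <;>
        simp only [targetSetEven, Set.mem_setOf_eq, memI, pPlusEven, sgnPlus,
          Int.even_iff, Int.odd_iff, ne_eq, true_and, and_true, not_true, not_false_iff,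
          false_and, and_false, or_false, false_or] <;> omega
  · -- a = 2
    rw [hg2 m n hx]
    obtain ⟨p0, p1, ⟨q', hq'⟩, ppar⟩ := emod_basic' t (n + 1) (by omega)
    rw [Int.even_iff] at hn
    simp only [targetSetEven, Set.mem_setOf_eq, memI, pPlusEven, sgnPlus,
      Int.even_iff, Int.odd_iff, ne_eq, true_and, and_true, not_true, not_false_iff,
      false_and, and_false, or_false, false_or]
    omega

set_option maxHeartbeats 2000000 in
private lemma injOn_g (t ℓ : ℤ) (ht : 2 ≤ t) (t2 : ℤ) (ht2 : t = t2 + t2) (hℓ : 2 ≤ ℓ)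
    (g : ℤ × ℤ × ℤ → (ℤ × ℤ) × ℤ)
    (hg2 : ∀ m n : ℤ, ((2, m, n) : ℤ × ℤ × ℤ) ∈ IndexSetPlusEven t ℓ →
        g (2, m, n) = ((t + 1, m), n + 1))
    (hG : ∀ m n : ℤ, ((1, m, n) : ℤ × ℤ × ℤ) ∈ IndexSetPlusEven t ℓ →
      ∃ j : ℤ, 0 ≤ j ∧ j ≤ t - 1 ∧ (2 * t) ∣ (t * m + n + t - 2 * j) ∧
        ((2 * j + 2 ≤ t ∧ g (1, m, n) = ((2 * j + 1, m), n + t)) ∨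
         (t ≤ 2 * j ∧ g (1, m, n) = ((2 * t - 2 * j, m), n + t)))) :
    Set.InjOn g (IndexSetPlusEven t ℓ) := by
  rintro ⟨a, m, n⟩ hx ⟨b, m', n'⟩ hy hxy
  have hx' := hx
  have hy' := hy
  simp only [IndexSetPlusEven, Set.mem_setOf_eq] at hx' hy'
  have hax : a = 1 ∨ a = 2 := by rcases hx' with ⟨h, -⟩ | ⟨h, -⟩ <;> [exact Or.inl h; exact Or.inr h]
  have hby : b = 1 ∨ b = 2 := by rcases hy' with ⟨h, -⟩ | ⟨h, -⟩ <;> [exact Or.inl h; exact Or.inr h]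
  rcases hax with rfl | rfl <;> rcases hby with rfl | rfl
  · obtain ⟨j, hj0, hj1, -, hc⟩ := hG m n hx
    obtain ⟨j', hj0', hj1', -, hc'⟩ := hG m' n' hy
    rcases hc with ⟨h1, e1⟩ | ⟨h1, e1⟩ <;> rcases hc' with ⟨h2, e2⟩ | ⟨h2, e2⟩ <;>
      rw [e1, e2] at hxy <;>
      · simp only [Prod.mk.injEq] at hxy
        obtain ⟨⟨-, h4⟩, h5⟩ := hxy
        simp only [Prod.mk.injEq, true_and, and_true]
        exact ⟨h4, by omega⟩
  · obtain ⟨j, hj0, hj1, -, hc⟩ := hG m n hx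
    have e2 := hg2 m' n' hy
    rcases hc with ⟨h1, e1⟩ | ⟨h1, e1⟩ <;> rw [e1, e2] at hxy <;>
      · exfalso
        simp only [Prod.mk.injEq] at hxy
        obtain ⟨⟨h3, -⟩, -⟩ := hxy
        omega
  · obtain ⟨j, hj0, hj1, -, hc⟩ := hG m' n' hy
    have e2 := hg2 m n hx
    rcases hc with ⟨h1, e1⟩ | ⟨h1, e1⟩ <;> rw [e1, e2] at hxy <;>
      · exfalso
        simp only [Prod.mk.injEq] at hxy
        obtain ⟨⟨h3, -⟩, -⟩ := hxy
        omega
  · rw [hg2 m n hx, hg2 m' n' hy] at hxy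
    simp only [Prod.mk.injEq] at hxy
    obtain ⟨⟨-, h4⟩, h5⟩ := hxy
    simp only [Prod.mk.injEq, true_and, and_true]
    exact ⟨h4, by omega⟩

set_option maxHeartbeats 2000000 in
private lemma surjOn_g (t ℓ : ℤ) (ht : 2 ≤ t) (t2 : ℤ) (ht2 : t = t2 + t2) (hℓ : 2 ≤ ℓ)
    (g : ℤ × ℤ × ℤ → (ℤ × ℤ) × ℤ)
    (hg2 : ∀ m n : ℤ, ((2, m, n) : ℤ × ℤ × ℤ) ∈ IndexSetPlusEven t ℓ →
        g (2, m, n) = ((t + 1, m), n + 1))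
    (hg1a : ∀ m n j : ℤ, ((1, m, n) : ℤ × ℤ × ℤ) ∈ IndexSetPlusEven t ℓ →
        0 ≤ j → j ≤ t - 1 → (2 * t) ∣ (t * m + n + t - 2 * j) → 2 * j + 2 ≤ t →
        g (1, m, n) = ((2 * j + 1, m), n + t))
    (hg1b : ∀ m n j : ℤ, ((1, m, n) : ℤ × ℤ × ℤ) ∈ IndexSetPlusEven t ℓ →
        0 ≤ j → j ≤ t - 1 → (2 * t) ∣ (t * m + n + t - 2 * j) → t ≤ 2 * j →
        g (1, m, n) = ((2 * t - 2 * j, m), n + t)) :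
    Set.SurjOn g (IndexSetPlusEven t ℓ) (targetSetEven t ℓ) := by
  rintro ⟨⟨i, i'⟩, u⟩ hy
  have hy' := hy
  simp only [targetSetEven, Set.mem_setOf_eq] at hy'
  obtain ⟨hmem, hp⟩ := hy'
  obtain ⟨p0, p1, ⟨q', hq'⟩, ppar⟩ := emod_basic' t u (by omega)
  simp only [memI] at hmem
  simp only [pPlusEven, sgnPlus, Int.even_iff, Int.odd_iff, ne_eq] at hp
  rcases hmem with ⟨hi1, hi2, hi'1, hi'2⟩ | ⟨hit, hi'1, hi'2⟩
  · -- i ≤ t : preimage (1, i', u - t)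
    have key : (u % (2 * t)) % 2 = 0 := by omega
    have hmemx : ((1, i', u - t) : ℤ × ℤ × ℤ) ∈ IndexSetPlusEven t ℓ :=
      Or.inl ⟨rfl, hi'1, hi'2, Int.even_iff.mpr (show (u - t) % 2 = 0 by omega)⟩
    rcases Int.even_or_odd i' with ⟨k, hk⟩ | ⟨k, hk⟩
    · subst hk
      have key2 : (u % (2 * t) + 2 ≤ t ∧ i = u % (2 * t) + 1) ∨
          (t ≤ u % (2 * t) ∧ i = 2 * t - u % (2 * t)) := by omega
      obtain ⟨j, hj⟩ : ∃ j, u % (2 * t) = 2 * j := ⟨u % (2 * t) / 2, by omega⟩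
      have hdvd : (2 * t) ∣ (t * (k + k) + (u - t) + t - 2 * j) :=
        ⟨k + q', by linear_combination hq' + hj⟩
      rcases key2 with ⟨hb, hieq⟩ | ⟨hb, hieq⟩
      · have hgv := hg1a (k + k) (u - t) j hmemx (by omega) (by omega) hdvd (by omega)
        exact ⟨(1, k + k, u - t), hmemx, by rw [hgv]; simp only [Prod.mk.injEq, true_and, and_true]; omega⟩
      · have hgv := hg1b (k + k) (u - t) j hmemx (by omega) (by omega) hdvd (by omega)
        exact ⟨(1, k + k, u - t), hmemx, by rw [hgv]; simp only [Prod.mk.injEq, true_and, and_true]; omega⟩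
    · subst hk
      have key2 : (u % (2 * t) ≤ t - 1 ∧ i = t - u % (2 * t)) ∨
          (t ≤ u % (2 * t) ∧ i = u % (2 * t) + 1 - t) := by omega
      rcases key2 with ⟨hb, hieq⟩ | ⟨hb, hieq⟩
      · obtain ⟨j, hj⟩ : ∃ j, u % (2 * t) + t = 2 * j := ⟨(u % (2 * t) + t) / 2, by omega⟩
        have hdvd : (2 * t) ∣ (t * (2 * k + 1) + (u - t) + t - 2 * j) :=
          ⟨k + q', by linear_combination hq' + hj⟩
        have hgv := hg1b (2 * k + 1) (u - t) j hmemx (by omega) (by omega) hdvd (by omega)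
        exact ⟨(1, 2 * k + 1, u - t), hmemx, by rw [hgv]; simp only [Prod.mk.injEq, true_and, and_true]; omega⟩
      · obtain ⟨j, hj⟩ : ∃ j, u % (2 * t) - t = 2 * j := ⟨(u % (2 * t) - t) / 2, by omega⟩
        have hdvd : (2 * t) ∣ (t * (2 * k + 1) + (u - t) + t - 2 * j) :=
          ⟨k + q' + 1, by linear_combination hq' + hj⟩
        have hgv := hg1a (2 * k + 1) (u - t) j hmemx (by omega) (by omega) hdvd (by omega)
        exact ⟨(1, 2 * k + 1, u - t), hmemx, by rw [hgv]; simp only [Prod.mk.injEq, true_and, and_true]; omega⟩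
  · -- i = t + 1 : preimage (2, i', u - 1)
    subst hit
    have hmemx : ((2, i', u - 1) : ℤ × ℤ × ℤ) ∈ IndexSetPlusEven t ℓ :=
      Or.inr ⟨rfl, hi'1, hi'2, Int.even_iff.mpr (show (i' + (u - 1)) % 2 = 0 by omega)⟩
    have hgv := hg2 i' (u - 1) hmemx
    exact ⟨(2, i', u - 1), hmemx, by rw [hgv]; simp only [Prod.mk.injEq, true_and, and_true]; omega⟩

/-- Lemma on the embedding map `g`, even case, part (i):  for every `(1, m, v) ∈ 𝓘_{ℓ+}`
there is a unique `j ∈ {0, …, t−1}` with `m + (v+1) ≡ 2j/t (mod 2ℤ)` (encoded as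
`2t ∣ t·m + n + t − 2j` for `v = n/t`), and any map `g` satisfying the defining clauses
`g(2,m,v) = ((t+1,m), v + 1/t)` and `g(1,m,v) = ((2j+1,m), v+1)` for `0 ≤ j ≤ t/2 − 1`,
`g(1,m,v) = ((2t−2j,m), v+1)` for `t/2 ≤ j ≤ t−1`, is a bijection from `𝓘_{ℓ+}`
onto `{(𝐢,u) : p_+}`. -/
theorem embedding_g_even_bijective (t ℓ : ℤ) (ht : 2 ≤ t) (hteven : Even t) (hℓ : 2 ≤ ℓ) :
    (∀ m n : ℤ, ((1, m, n) : ℤ × ℤ × ℤ) ∈ IndexSetPlusEven t ℓ →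
      ∃! j : ℤ, 0 ≤ j ∧ j ≤ t - 1 ∧ (2 * t) ∣ (t * m + n + t - 2 * j)) ∧
    (∀ g : ℤ × ℤ × ℤ → (ℤ × ℤ) × ℤ,
      (∀ m n : ℤ, ((2, m, n) : ℤ × ℤ × ℤ) ∈ IndexSetPlusEven t ℓ →
        g (2, m, n) = ((t + 1, m), n + 1)) →
      (∀ m n j : ℤ, ((1, m, n) : ℤ × ℤ × ℤ) ∈ IndexSetPlusEven t ℓ →
        0 ≤ j → j ≤ t - 1 → (2 * t) ∣ (t * m + n + t - 2 * j) → 2 * j + 2 ≤ t →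
        g (1, m, n) = ((2 * j + 1, m), n + t)) →
      (∀ m n j : ℤ, ((1, m, n) : ℤ × ℤ × ℤ) ∈ IndexSetPlusEven t ℓ →
        0 ≤ j → j ≤ t - 1 → (2 * t) ∣ (t * m + n + t - 2 * j) → t ≤ 2 * j →
        g (1, m, n) = ((2 * t - 2 * j, m), n + t)) →
      Set.BijOn g (IndexSetPlusEven t ℓ) (targetSetEven t ℓ)) := by
  constructor
  · intro m n hmn
    have hn : Even n := by
      have h' := hmn
      simp only [IndexSetPlusEven, Set.mem_setOf_eq] at h'
      rcases h' with ⟨-, -, -, hh⟩ | ⟨hh, -⟩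
      · exact hh
      · exact absurd hh (by norm_num)
    exact exists_unique_j' t ht hteven m n hn
  · intro g hg2 hg1a hg1b
    obtain ⟨t2, ht2⟩ := hteven
    have hG : ∀ m n : ℤ, ((1, m, n) : ℤ × ℤ × ℤ) ∈ IndexSetPlusEven t ℓ →
        ∃ j : ℤ, 0 ≤ j ∧ j ≤ t - 1 ∧ (2 * t) ∣ (t * m + n + t - 2 * j) ∧
          ((2 * j + 2 ≤ t ∧ g (1, m, n) = ((2 * j + 1, m), n + t)) ∨
           (t ≤ 2 * j ∧ g (1, m, n) = ((2 * t - 2 * j, m), n + t))) := by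
      intro m n h
      have h' := h
      simp only [IndexSetPlusEven, Set.mem_setOf_eq] at h'
      have hn : Even n := by
        rcases h' with ⟨-, -, -, hh⟩ | ⟨hh, -⟩
        · exact hh
        · exact absurd hh (by norm_num)
      obtain ⟨j, ⟨hj0, hj1, hjd⟩, -⟩ := exists_unique_j' t ht ⟨t2, ht2⟩ m n hn
      by_cases hcase : 2 * j + 2 ≤ t
      · exact ⟨j, hj0, hj1, hjd, Or.inl ⟨hcase, hg1a m n j h hj0 hj1 hjd hcase⟩⟩
      · have h2j : t ≤ 2 * j := by omega
        exact ⟨j, hj0, hj1, hjd, Or.inr ⟨h2j, hg1b m n j h hj0 hj1 hjd h2j⟩⟩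
    exact ⟨mapsTo_g t ℓ ht t2 ht2 hℓ g hg2 hG, injOn_g t ℓ ht t2 ht2 hℓ g hg2 hG,
      surjOn_g t ℓ ht t2 ht2 hℓ g hg2 hg1a hg1b⟩
end

section
/- (Lemma on the embedding map g', even case, part (ii).) Let t ≥ 2 be even and ℓ ≥ 2. For every (1,m,u) ∈ 𝓘'_{ℓ+} there is a unique j ∈ {0,1,…,t−1} with m + u ≡ 2j/t (mod 2ℤ). Define g' : 𝓘'_{ℓ+} → 𝐈 × (1/t)ℤ by: g'(2,m,u) = ((t+1,m), u); and g'(1,m,u) = ((2j+1,m), u) if 0 ≤ j ≤ t/2 − 1, g'(1,m,u) = ((2t−2j,m), u) if t/2 ≤ j ≤ t−1, where j is the unique index above. Then g' is a bijection from 𝓘'_{ℓ+} onto {(𝐢,u) ∈ 𝐈 × (1/t)ℤ : (𝐢,u) satisfies p_+}. -/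
private lemma emod_eq_of'' {a b r : ℤ} (h0 : 0 ≤ r) (h1 : r < b) (hd : b ∣ a - r) : a % b = r := by
  obtain ⟨c, hc⟩ := hd
  have ha : a = r + b * c := by linarith
  rw [ha, Int.add_mul_emod_self_left, Int.emod_eq_of_lt h0 h1]

private lemma self_sub_emod' (a b : ℤ) : b ∣ a - a % b := by
  have := Int.mul_ediv_add_emod a b
  exact ⟨a / b, by linarith⟩

private lemma dvd_shift_even' {t m n c : ℤ} (hm : Even m) : (2*t ∣ t*m + n - c) ↔ (2*t ∣ n - c) := by
  obtain ⟨m', rfl⟩ := hm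
  have h : t*(m'+m') + n - c = 2*t*m' + (n - c) := by ring
  rw [h]
  exact dvd_add_right ⟨m', rfl⟩

private lemma dvd_shift_odd' {t m n c : ℤ} (hm : Odd m) : (2*t ∣ t*m + n - c) ↔ (2*t ∣ n - (c - t)) := by
  obtain ⟨m', rfl⟩ := hm
  have h : t*(2*m'+1) + n - c = 2*t*m' + (n - (c - t)) := by ring
  rw [h]
  exact dvd_add_right ⟨m', rfl⟩

private lemma eq_of_dvd_small' {t a b : ℤ} (h : t ∣ a - b) (h1 : -t < a - b) (h2 : a - b < t) : a = b := by
  have := Int.eq_zero_of_abs_lt_dvd h (abs_lt.mpr ⟨h1, h2⟩)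
  omega



/- We encode `u ∈ (1/t)ℤ` by the integer `n = t·u`.  A triple `(a, m, u)` of the index
set `𝓘_ℓ` is encoded as `(a, m, n) : ℤ × ℤ × ℤ`, and a pair `(𝐢, u) = ((i, i'), u)` of
`𝐈 × (1/t)ℤ` is encoded as `((i, i'), n) : (ℤ × ℤ) × ℤ`. -/

/-- The set `𝓘'_{ℓ+}` of triples of `𝓘_ℓ` satisfying the parity condition `P'_+`
(for the rank-2 Cartan matrix `M_t` with `t` even): `tu` even for `a = 1`,
`m + tu` odd for `a = 2`. -/
def IndexSetPlusEven' (t ℓ : ℤ) : Set (ℤ × ℤ × ℤ) :=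
  {x | (x.1 = 1 ∧ 1 ≤ x.2.1 ∧ x.2.1 ≤ ℓ - 1 ∧ Even x.2.2) ∨
       (x.1 = 2 ∧ 1 ≤ x.2.1 ∧ x.2.1 ≤ t * ℓ - 1 ∧ Odd (x.2.1 + x.2.2))}

/-- Lemma on the embedding map `g'`, even case, part (ii):  for every `(1, m, u) ∈ 𝓘'_{ℓ+}`
there is a unique `j ∈ {0, …, t−1}` with `m + u ≡ 2j/t (mod 2ℤ)` (encoded as
`2t ∣ t·m + n − 2j` for `u = n/t`), and any map `g'` satisfying the defining clauses
`g'(2,m,u) = ((t+1,m), u)` and `g'(1,m,u) = ((2j+1,m), u)` for `0 ≤ j ≤ t/2 − 1`,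
`g'(1,m,u) = ((2t−2j,m), u)` for `t/2 ≤ j ≤ t−1`, is a bijection from `𝓘'_{ℓ+}`
onto `{(𝐢,u) : p_+}`. -/
theorem embedding_g'_even_bijective (t ℓ : ℤ) (ht : 2 ≤ t) (hteven : Even t) (hℓ : 2 ≤ ℓ) :
    (∀ m n : ℤ, ((1, m, n) : ℤ × ℤ × ℤ) ∈ IndexSetPlusEven' t ℓ →
      ∃! j : ℤ, 0 ≤ j ∧ j ≤ t - 1 ∧ (2 * t) ∣ (t * m + n - 2 * j)) ∧
    (∀ g' : ℤ × ℤ × ℤ → (ℤ × ℤ) × ℤ,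
      (∀ m n : ℤ, ((2, m, n) : ℤ × ℤ × ℤ) ∈ IndexSetPlusEven' t ℓ →
        g' (2, m, n) = ((t + 1, m), n)) →
      (∀ m n j : ℤ, ((1, m, n) : ℤ × ℤ × ℤ) ∈ IndexSetPlusEven' t ℓ →
        0 ≤ j → j ≤ t - 1 → (2 * t) ∣ (t * m + n - 2 * j) → 2 * j + 2 ≤ t →
        g' (1, m, n) = ((2 * j + 1, m), n)) →
      (∀ m n j : ℤ, ((1, m, n) : ℤ × ℤ × ℤ) ∈ IndexSetPlusEven' t ℓ →
        0 ≤ j → j ≤ t - 1 → (2 * t) ∣ (t * m + n - 2 * j) → t ≤ 2 * j →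
        g' (1, m, n) = ((2 * t - 2 * j, m), n)) →
      Set.BijOn g' (IndexSetPlusEven' t ℓ) (targetSetEven t ℓ)) := by
  have ht0 : 0 < t := by omega
  have h2t0 : 0 < 2 * t := by omega
  obtain ⟨t2, ht2⟩ := hteven
  -- Part 1: existence and uniqueness of j
  have part1 : ∀ m n : ℤ, ((1, m, n) : ℤ × ℤ × ℤ) ∈ IndexSetPlusEven' t ℓ →
      ∃! j : ℤ, 0 ≤ j ∧ j ≤ t - 1 ∧ (2 * t) ∣ (t * m + n - 2 * j) := by
    intro m n hmem
    simp only [IndexSetPlusEven', Set.mem_setOf_eq] at hmem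
    rcases hmem with ⟨-, -, -, hn⟩ | ⟨ha, -⟩
    · obtain ⟨n', rfl⟩ := hn
      refine ⟨(t2 * m + n') % t, ⟨Int.emod_nonneg _ (by omega),
        by have := Int.emod_lt_of_pos (t2 * m + n') ht0; omega, ?_⟩, ?_⟩
      · obtain ⟨c, hc⟩ := self_sub_emod' (t2 * m + n') t
        exact ⟨c, by linear_combination 2*hc + m*ht2⟩
      · rintro j' ⟨hj'0, hj'1, hj'd⟩
        have hr0 : 0 ≤ (t2 * m + n') % t := Int.emod_nonneg _ (by omega)
        have hr1 : (t2 * m + n') % t < t := Int.emod_lt_of_pos _ ht0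
        obtain ⟨c, hc⟩ := self_sub_emod' (t2 * m + n') t
        have hd2 : (2 * t) ∣ (t * m + (n' + n') - 2 * ((t2 * m + n') % t)) :=
          ⟨c, by linear_combination 2*hc + m*ht2⟩
        obtain ⟨c1, hc1⟩ := hj'd
        obtain ⟨c2, hc2⟩ := hd2
        have hdd : t ∣ j' - (t2 * m + n') % t := ⟨c2 - c1, by linarith [mul_sub (2*t) c2 c1]⟩
        exact eq_of_dvd_small' hdd (by omega) (by omega)
    · omega
  refine ⟨part1, ?_⟩
  intro g' hg2 hg1lo hg1hi
  -- auxiliary facts about p = n % (2t)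
  have hnp : ∀ n : ℤ, n % (2 * t) % 2 = n % 2 := fun n => Int.emod_emod_of_dvd n ⟨t, by ring⟩
  have hp0 : ∀ n : ℤ, 0 ≤ n % (2 * t) := fun n => Int.emod_nonneg _ (by omega)
  have hplt : ∀ n : ℤ, n % (2 * t) < 2 * t := fun n => Int.emod_lt_of_pos _ h2t0
  -- computation of p given j, by parity of m
  have hp_ev : ∀ m n j : ℤ, Even m → 0 ≤ j → j ≤ t - 1 → (2 * t) ∣ (t * m + n - 2 * j) →
      n % (2 * t) = 2 * j := by
    intro m n j hm h0 h1 hd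
    exact emod_eq_of'' (by omega) (by omega) ((dvd_shift_even' hm).mp hd)
  have hp_odd_hi : ∀ m n j : ℤ, Odd m → 0 ≤ j → j ≤ t - 1 → (2 * t) ∣ (t * m + n - 2 * j) →
      t ≤ 2 * j → n % (2 * t) = 2 * j - t := by
    intro m n j hm h0 h1 hd hj
    exact emod_eq_of'' (by omega) (by omega) ((dvd_shift_odd' hm).mp hd)
  have hp_odd_lo : ∀ m n j : ℤ, Odd m → 0 ≤ j → j ≤ t - 1 → (2 * t) ∣ (t * m + n - 2 * j) →
      2 * j + 2 ≤ t → n % (2 * t) = 2 * j + t := by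
    intro m n j hm h0 h1 hd hj
    obtain ⟨c, hc⟩ := (dvd_shift_odd' hm).mp hd
    exact emod_eq_of'' (by omega) (by omega) ⟨c - 1, by linarith [mul_sub (2*t) c 1]⟩
  have mk_mem : ∀ i i' n : ℤ, memI t ℓ i i' → pPlusEven t i i' n →
      (((i, i'), n) : (ℤ × ℤ) × ℤ) ∈ targetSetEven t ℓ := fun i i' n h1 h2 => ⟨h1, h2⟩
  refine ⟨?_, ?_, ?_⟩
  · -- MapsTo
    rintro ⟨a, m, n⟩ hx
    have hx' := hx
    simp only [IndexSetPlusEven', Set.mem_setOf_eq] at hx'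
    rcases hx' with ⟨ha, hm1, hm2, hn⟩ | ⟨ha, hm1, hm2, hmn⟩
    · -- a = 1
      subst ha
      obtain ⟨j, ⟨hj0, hj1, hjd⟩, -⟩ := part1 m n hx
      have hjev : (2*j) % 2 = 0 := by omega
      rcases Int.even_or_odd m with hm | hm
      · have hp := hp_ev m n j hm hj0 hj1 hjd
        have hm' := Int.even_iff.mp hm
        rcases (by omega : 2 * j + 2 ≤ t ∨ t ≤ 2 * j) with hj | hj
        · rw [hg1lo m n j hx hj0 hj1 hjd hj]
          refine mk_mem _ _ _ (Or.inl ⟨by omega, by omega, hm1, hm2⟩) ?_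
          simp only [pPlusEven, sgnPlus]
          rw [hp]
          exact Or.inl ⟨⟨j, by ring⟩, by omega, Or.inr ⟨Or.inl rfl,
            Or.inr ⟨by omega, Int.odd_iff.mpr (by omega)⟩⟩⟩
        · rw [hg1hi m n j hx hj0 hj1 hjd hj]
          refine mk_mem _ _ _ (Or.inl ⟨by omega, by omega, hm1, hm2⟩) ?_
          simp only [pPlusEven, sgnPlus]
          rw [hp]
          refine Or.inr (Or.inl ⟨⟨j, by ring⟩, by omega, Or.inr ⟨Or.inr (by ring), ?_⟩⟩)
          rintro (⟨h1, -⟩ | ⟨-, h2⟩)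
          · omega
          · rw [Int.odd_iff] at h2; omega
      · have hm' := Int.odd_iff.mp hm
        rcases (by omega : 2 * j + 2 ≤ t ∨ t ≤ 2 * j) with hj | hj
        · have hp := hp_odd_lo m n j hm hj0 hj1 hjd hj
          rw [hg1lo m n j hx hj0 hj1 hjd hj]
          refine mk_mem _ _ _ (Or.inl ⟨by omega, by omega, hm1, hm2⟩) ?_
          simp only [pPlusEven, sgnPlus]
          rw [hp]
          refine Or.inr (Or.inl ⟨⟨j + t2, by omega⟩, by omega, Or.inr ⟨Or.inl (by omega), ?_⟩⟩)
          rintro (⟨h1, -⟩ | ⟨-, h2⟩)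
          · omega
          · rw [Int.odd_iff] at h2; omega
        · have hp := hp_odd_hi m n j hm hj0 hj1 hjd hj
          rw [hg1hi m n j hx hj0 hj1 hjd hj]
          refine mk_mem _ _ _ (Or.inl ⟨by omega, by omega, hm1, hm2⟩) ?_
          simp only [pPlusEven, sgnPlus]
          rw [hp]
          exact Or.inl ⟨⟨j - t2, by omega⟩, by omega, Or.inr ⟨Or.inr (by omega),
            Or.inr ⟨by omega, Int.odd_iff.mpr (by omega)⟩⟩⟩
    · -- a = 2
      subst ha
      rw [hg2 m n hx]
      refine mk_mem _ _ _ (Or.inr ⟨rfl, hm1, hm2⟩) ?_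
      have hmn' := Int.odd_iff.mp hmn
      obtain ⟨p, hpdef⟩ : ∃ p, n % (2 * t) = p := ⟨_, rfl⟩
      have hnp' : p % 2 = n % 2 := by rw [← hpdef]; exact hnp n
      have hp0' : 0 ≤ p := hpdef ▸ hp0 n
      have hplt' : p < 2 * t := hpdef ▸ hplt n
      rcases Int.even_or_odd p with hpe | hpo
      · have hpe' := Int.even_iff.mp hpe
        have hoddm : Odd m := Int.odd_iff.mpr (by omega)
        rcases (by omega : p ≤ t - 1 ∨ t ≤ p) with hple | hpge
        · exact Or.inl ⟨by rw [hpdef]; exact hpe, by rw [hpdef]; exact hple,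
            Or.inl ⟨rfl, Or.inl ⟨rfl, hoddm⟩⟩⟩
        · exact Or.inr (Or.inl ⟨by rw [hpdef]; exact hpe, by rw [hpdef]; exact hpge,
            Or.inl ⟨rfl, Or.inl ⟨rfl, hoddm⟩⟩⟩)
      · have hpo' := Int.odd_iff.mp hpo
        refine Or.inr (Or.inr ⟨by rw [hpdef]; exact hpo, rfl, ?_⟩)
        rintro (⟨-, h1⟩ | ⟨h2, -⟩)
        · rw [Int.odd_iff] at h1; omega
        · exact h2 rfl
  · -- InjOn
    have key : ∀ a m n : ℤ, ((a, m, n) : ℤ × ℤ × ℤ) ∈ IndexSetPlusEven' t ℓ →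
        ∃ i : ℤ, ((a = 2 ∧ i = t + 1) ∨ (a = 1 ∧ i ≤ t)) ∧ g' (a, m, n) = ((i, m), n) := by
      intro a m n hx
      have hx' := hx
      simp only [IndexSetPlusEven', Set.mem_setOf_eq] at hx'
      rcases hx' with ⟨ha, -⟩ | ⟨ha, -⟩
      · subst ha
        obtain ⟨j, ⟨hj0, hj1, hjd⟩, -⟩ := part1 m n hx
        rcases (by omega : 2 * j + 2 ≤ t ∨ t ≤ 2 * j) with hj | hj
        · exact ⟨2 * j + 1, Or.inr ⟨rfl, by omega⟩, hg1lo m n j hx hj0 hj1 hjd hj⟩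
        · exact ⟨2 * t - 2 * j, Or.inr ⟨rfl, by omega⟩, hg1hi m n j hx hj0 hj1 hjd hj⟩
      · subst ha
        exact ⟨t + 1, Or.inl ⟨rfl, rfl⟩, hg2 m n hx⟩
    rintro ⟨a, m, n⟩ hx ⟨a', m', n'⟩ hy heq
    obtain ⟨i, hi, hgi⟩ := key a m n hx
    obtain ⟨i', hi', hgi'⟩ := key a' m' n' hy
    rw [hgi, hgi'] at heq
    simp only [Prod.mk.injEq] at heq
    obtain ⟨⟨hii, hmm⟩, hnn⟩ := heq
    have haa : a = a' := by rcases hi with ⟨h1, h2⟩ | ⟨h1, h2⟩ <;>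
      rcases hi' with ⟨h3, h4⟩ | ⟨h3, h4⟩ <;> omega
    simp only [Prod.mk.injEq]
    exact ⟨haa, hmm, hnn⟩
  · -- SurjOn
    rintro ⟨⟨i, m⟩, n⟩ hy
    simp only [targetSetEven, Set.mem_setOf_eq] at hy
    obtain ⟨hmemI, hpp⟩ := hy
    obtain ⟨p, hpdef⟩ : ∃ p, n % (2 * t) = p := ⟨_, rfl⟩
    have hnp' : p % 2 = n % 2 := by rw [← hpdef]; exact hnp n
    have hp0' : 0 ≤ p := hpdef ▸ hp0 n
    have hplt' : p < 2 * t := hpdef ▸ hplt n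
    have hdnp : 2 * t ∣ n - p := hpdef ▸ self_sub_emod' n (2 * t)
    simp only [pPlusEven] at hpp
    rw [hpdef] at hpp
    rcases hmemI with ⟨hi1, hi2, hm1, hm2⟩ | ⟨hieq, hm1, hm2⟩
    · -- 1 ≤ i ≤ t : preimage of the form (1, m, n)
      rcases hpp with ⟨hpe, hple, hc⟩ | ⟨hpe, hpge, hc⟩ | ⟨hpo, hie, -⟩
      · rcases hc with ⟨hie, -⟩ | ⟨hieq2, hsgn⟩
        · omega
        · have hpe' := Int.even_iff.mp hpe
          have hodd : Odd (i + m) := by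
            rcases hsgn with ⟨h, -⟩ | ⟨-, h⟩
            · omega
            · exact h
          have hodd' := Int.odd_iff.mp hodd
          have hne : Even n := Int.even_iff.mpr (by omega)
          have hxmem : ((1, m, n) : ℤ × ℤ × ℤ) ∈ IndexSetPlusEven' t ℓ :=
            Or.inl ⟨rfl, hm1, hm2, hne⟩
          obtain ⟨r, hr⟩ := hpe
          rcases hieq2 with hieq2 | hieq2
          · -- i = p + 1, m even, j = r
            have hme : Even m := Int.even_iff.mpr (by omega)
            have hjd : 2 * t ∣ t * m + n - 2 * r := by
              rw [dvd_shift_even' hme, show n - 2 * r = n - p by omega]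
              exact hdnp
            refine ⟨(1, m, n), hxmem, ?_⟩
            rw [hg1lo m n r hxmem (by omega) (by omega) hjd (by omega)]
            simp only [Prod.mk.injEq, and_true]
            omega
          · -- i = t - p, m odd, 2j = p + t
            have hmo : Odd m := Int.odd_iff.mpr (by omega)
            have hjd : 2 * t ∣ t * m + n - 2 * (r + t2) := by
              rw [dvd_shift_odd' hmo, show 2 * (r + t2) - t = p by omega]
              exact hdnp
            refine ⟨(1, m, n), hxmem, ?_⟩
            rw [hg1hi m n (r + t2) hxmem (by omega) (by omega) hjd (by omega)]
            simp only [Prod.mk.injEq, and_true]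
            omega
      · rcases hc with ⟨hie, -⟩ | ⟨hieq2, hsgn⟩
        · omega
        · have hpe' := Int.even_iff.mp hpe
          have hev : Even (i + m) := by
            rw [← Int.not_odd_iff_even]
            intro h
            exact hsgn (Or.inr ⟨by omega, h⟩)
          have hev' := Int.even_iff.mp hev
          have hne : Even n := Int.even_iff.mpr (by omega)
          have hxmem : ((1, m, n) : ℤ × ℤ × ℤ) ∈ IndexSetPlusEven' t ℓ :=
            Or.inl ⟨rfl, hm1, hm2, hne⟩
          obtain ⟨r, hr⟩ := hpe
          rcases hieq2 with hieq2 | hieq2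
          · -- i = p + 1 - t, m odd, 2j = p - t
            have hmo : Odd m := Int.odd_iff.mpr (by omega)
            have hjd : 2 * t ∣ t * m + n - 2 * (r - t2) := by
              rw [dvd_shift_odd' hmo]
              obtain ⟨c, hc⟩ := hdnp
              exact ⟨c + 1, by linarith [mul_add (2*t) c 1]⟩
            refine ⟨(1, m, n), hxmem, ?_⟩
            rw [hg1lo m n (r - t2) hxmem (by omega) (by omega) hjd (by omega)]
            simp only [Prod.mk.injEq, and_true]
            omega
          · -- i = 2t - p, m even, 2j = p
            have hme : Even m := Int.even_iff.mpr (by omega)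
            have hjd : 2 * t ∣ t * m + n - 2 * r := by
              rw [dvd_shift_even' hme, show n - 2 * r = n - p by omega]
              exact hdnp
            refine ⟨(1, m, n), hxmem, ?_⟩
            rw [hg1hi m n r hxmem (by omega) (by omega) hjd (by omega)]
            simp only [Prod.mk.injEq, and_true]
            omega
      · omega
    · -- i = t + 1 : preimage of the form (2, m, n)
      have hmo : Odd (m + n) := by
        rw [Int.odd_iff]
        rcases hpp with ⟨hpe, hple, hc⟩ | ⟨hpe, hpge, hc⟩ | ⟨hpo, -, hnsgn⟩
        · have hpe' := Int.even_iff.mp hpe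
          have hom : Odd m := by
            rcases hc with ⟨-, hsgn⟩ | ⟨hieq2, -⟩
            · rcases hsgn with ⟨-, h⟩ | ⟨h, -⟩
              · exact h
              · omega
            · omega
          have := Int.odd_iff.mp hom
          omega
        · have hpe' := Int.even_iff.mp hpe
          have hom : Odd m := by
            rcases hc with ⟨-, hsgn⟩ | ⟨hieq2, -⟩
            · rcases hsgn with ⟨-, h⟩ | ⟨h, -⟩
              · exact h
              · omega
            · omega
          have := Int.odd_iff.mp hom
          omega
        · have hpo' := Int.odd_iff.mp hpo
          have hem : Even m := by
            rw [← Int.not_odd_iff_even]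
            intro h
            exact hnsgn (Or.inl ⟨hieq, h⟩)
          have := Int.even_iff.mp hem
          omega
      have hxmem : ((2, m, n) : ℤ × ℤ × ℤ) ∈ IndexSetPlusEven' t ℓ :=
        Or.inr ⟨rfl, hm1, hm2, hmo⟩
      refine ⟨(2, m, n), hxmem, ?_⟩
      rw [hg2 m n hxmem]
      simp only [Prod.mk.injEq, and_true]
      omega
end

section
/- (Parity compatibility of the T-system, odd case.) Let t ≥ 1 be odd and ℓ ≥ 2, and suppose (a,m,u) ∈ 𝓘_ℓ satisfies P'_+. Then every triple occurring in the T-system relation of 𝕋_ℓ(M_t) centered at (a,m,u) satisfies P_+; explicitly: (a, m, u − d_a/t) and (a, m, u + d_a/t) satisfy P_+; (a, m−1, u) and (a, m+1, u) satisfy P_+; if a = 1, the triple (2, tm, u) satisfies P_+; and if a = 2, writing m = t·m' + j with 0 ≤ j < t, all the triples (1, m'+1, u + (j+1−2k)/t) for 1 ≤ k ≤ j and (1, m', u + (t−j+1−2k)/t) for 1 ≤ k ≤ t−j satisfy P_+ (here 'satisfies P_+' is asserted whenever the middle entry of the triple lies in the admissible range 1 ≤ m ≤ t_a·ℓ − 1).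 -/
/- We encode `u ∈ (1/t)ℤ` by the integer `n = t·u`; then `m + tu = m + n`,
`u ± d_a/t` is encoded as `n ± d_a` (`d_1 = t`, `d_2 = 1`), and `u + c/t` as `n + c`. -/

/-- The parity condition `P_+` for the rank-2 Cartan matrix `M_t` with `t` odd:
`m + tu` odd for `a = 1`, `m + tu` even for `a = 2`. -/
def PPlusOdd (a m n : ℤ) : Prop :=
  (a = 1 ∧ Odd (m + n)) ∨ (a = 2 ∧ Even (m + n))

/-- The parity condition `P'_+` for the rank-2 Cartan matrix `M_t` with `t` odd:
`m + tu` even for `a = 1`, `m + tu` odd for `a = 2`. -/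
def PPlusOdd' (a m n : ℤ) : Prop :=
  (a = 1 ∧ Even (m + n)) ∨ (a = 2 ∧ Odd (m + n))

/-- The admissible range `1 ≤ m ≤ t_a·ℓ − 1` of the middle entry (`t_1·ℓ = ℓ`,
`t_2·ℓ = t·ℓ`). -/
def inRange (t ℓ a m : ℤ) : Prop :=
  1 ≤ m ∧ m ≤ (if a = 1 then ℓ else t * ℓ) - 1

/-- Parity compatibility of the T-system `𝕋_ℓ(M_t)`, odd case: if `(a, m, u) ∈ 𝓘_ℓ`
satisfies `P'_+`, then every triple occurring in the T-system relation centered at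
`(a, m, u)` satisfies `P_+` (asserted whenever the middle entry is in the admissible
range). -/
theorem Tsystem_parity_compatible_odd (t ℓ : ℤ) (ht : 1 ≤ t) (htodd : Odd t)
    (hℓ : 2 ≤ ℓ) (a m n : ℤ)
    (hmem : (a = 1 ∨ a = 2) ∧ inRange t ℓ a m)
    (hP : PPlusOdd' a m n) :
    PPlusOdd a m (n - if a = 1 then t else 1) ∧
    PPlusOdd a m (n + if a = 1 then t else 1) ∧
    (inRange t ℓ a (m - 1) → PPlusOdd a (m - 1) n) ∧
    (inRange t ℓ a (m + 1) → PPlusOdd a (m + 1) n) ∧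
    (a = 1 → (inRange t ℓ 2 (t * m) → PPlusOdd 2 (t * m) n)) ∧
    (a = 2 → ∀ m' j : ℤ, 0 ≤ j → j < t → m = t * m' + j →
      (∀ k : ℤ, 1 ≤ k → k ≤ j →
        (inRange t ℓ 1 (m' + 1) → PPlusOdd 1 (m' + 1) (n + (j + 1 - 2 * k)))) ∧
      (∀ k : ℤ, 1 ≤ k → k ≤ t - j →
        (inRange t ℓ 1 m' → PPlusOdd 1 m' (n + (t - j + 1 - 2 * k))))) := by
  have ht2 : t % 2 = 1 := Int.odd_iff.mp htodd
  have key : ∀ x : ℤ, (t * x) % 2 = x % 2 := fun x => by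
    rw [Int.mul_emod, ht2, one_mul, Int.emod_emod_of_dvd _ (by norm_num)]
  have hm := key m
  rcases hmem.1 with ha | ha <;> subst ha <;>
    simp only [PPlusOdd, PPlusOdd', Int.even_iff, Int.odd_iff, inRange] at hP ⊢ <;>
    norm_num <;>
    refine ⟨by omega, by omega, by omega, by omega, ?_⟩
  · intros; omega
  · intro m' j h0 hj hmj
    have hm' := key m'
    exact ⟨fun k hk1 hk2 hr => by omega, fun k hk1 hk2 hr => by omega⟩
end

section
/- (Parity compatibility of the T-system, even case.) Let t ≥ 2 be even and ℓ ≥ 2, and suppose (a,m,u) ∈ 𝓘_ℓ satisfies P'_+. Then every triple occurring in the T-system relation of 𝕋_ℓ(M_t) centered at (a,m,u) satisfies P_+; explicitly: (a, m, u − d_a/t) and (a, m, u + d_a/t) satisfy P_+; (a, m−1, u) and (a, m+1, u) satisfy P_+; if a = 1, the triple (2, tm, u) satisfies P_+; and if a = 2, writing m = t·m' + j with 0 ≤ j < t, all the triples (1, m'+1, u + (j+1−2k)/t) for 1 ≤ k ≤ j and (1, m', u + (t−j+1−2k)/t) for 1 ≤ k ≤ t−j satisfy P_+ (here 'satisfies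 P_+' is asserted whenever the middle entry of the triple lies in the admissible range 1 ≤ m ≤ t_a·ℓ − 1). -/
/- We encode `u ∈ (1/t)ℤ` by the integer `n = t·u`; then `tu = n`, `m + tu = m + n`,
`u ± d_a/t` is encoded as `n ± d_a` (`d_1 = t`, `d_2 = 1`), and `u + c/t` as `n + c`. -/

/-- The parity condition `P_+` for the rank-2 Cartan matrix `M_t` with `t` even:
`tu` even for `a = 1`, `m + tu` even for `a = 2`. -/
def PPlusEven (a m n : ℤ) : Prop :=
  (a = 1 ∧ Even n) ∨ (a = 2 ∧ Even (m + n))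

/-- The parity condition `P'_+` for the rank-2 Cartan matrix `M_t` with `t` even:
`tu` even for `a = 1`, `m + tu` odd for `a = 2`. -/
def PPlusEven' (a m n : ℤ) : Prop :=
  (a = 1 ∧ Even n) ∨ (a = 2 ∧ Odd (m + n))

/-- Parity compatibility of the T-system `𝕋_ℓ(M_t)`, even case: if `(a, m, u) ∈ 𝓘_ℓ`
satisfies `P'_+`, then every triple occurring in the T-system relation centered at
`(a, m, u)` satisfies `P_+` (asserted whenever the middle entry is in the admissible
range). -/
theorem Tsystem_parity_compatible_even (t ℓ : ℤ) (ht : 2 ≤ t) (hteven : Even t)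
    (hℓ : 2 ≤ ℓ) (a m n : ℤ)
    (hmem : (a = 1 ∨ a = 2) ∧ inRange t ℓ a m)
    (hP : PPlusEven' a m n) :
    PPlusEven a m (n - if a = 1 then t else 1) ∧
    PPlusEven a m (n + if a = 1 then t else 1) ∧
    (inRange t ℓ a (m - 1) → PPlusEven a (m - 1) n) ∧
    (inRange t ℓ a (m + 1) → PPlusEven a (m + 1) n) ∧
    (a = 1 → (inRange t ℓ 2 (t * m) → PPlusEven 2 (t * m) n)) ∧
    (a = 2 → ∀ m' j : ℤ, 0 ≤ j → j < t → m = t * m' + j →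
      (∀ k : ℤ, 1 ≤ k → k ≤ j →
        (inRange t ℓ 1 (m' + 1) → PPlusEven 1 (m' + 1) (n + (j + 1 - 2 * k)))) ∧
      (∀ k : ℤ, 1 ≤ k → k ≤ t - j →
        (inRange t ℓ 1 m' → PPlusEven 1 m' (n + (t - j + 1 - 2 * k))))) := by
  obtain ⟨ha, hr⟩ := hmem
  have he := Int.even_iff.mp hteven
  have hmul : ∀ x : ℤ, (t * x) % 2 = 0 := fun x => by rw [Int.mul_emod, he]; simp
  rcases ha with ha | ha <;> subst ha <;>
    simp only [PPlusEven, PPlusEven', Int.even_iff, Int.odd_iff] at hP ⊢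
  · have h1 := hmul m
    refine ⟨?_, ?_, fun _ => ?_, fun _ => ?_, fun _ _ => ?_, fun h => by omega⟩ <;> simp <;> omega
  · refine ⟨by simp; omega, by simp; omega, fun _ => by simp; omega, fun _ => by simp; omega,
      fun h => by omega,
      fun _ m' j h0 hj hm => ⟨fun k hk1 hk2 _ => ?_, fun k hk1 hk2 _ => ?_⟩⟩ <;>
    have h1 := hmul m' <;> simp <;> omega
end

section
/- (Parity compatibility of the Y-system, odd case.) Let t ≥ 1 be odd and ℓ ≥ 2, and suppose (a,m,u) ∈ 𝓘_ℓ satisfies P_+. Then every triple occurring in the Y-system relation of 𝕐_ℓ(M_t) centered at (a,m,u) satisfies P'_+; explicitly: (a, m, u − d_a/t) and (a, m, u + d_a/t) satisfy P'_+; (a, m−1, u) and (a, m+1, u) satisfy P'_+; if a = 1, all the triples (2, tm+j, u + (t−|j|+1−2k)/t) for −(t−1) ≤ j ≤ t−1 and 1 ≤ k ≤ t−|j| satisfy P'_+; and if a = 2 and t divides m, the triple (1, m/t, u) satisfies P'_+ (here 'satisfies P'_+' is asserted whenever the middle entry of the triple lies in the admissible range 1 ≤ m ≤ t_a·ℓ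 − 1). -/
/-- Parity compatibility of the Y-system `𝕐_ℓ(M_t)`, odd case: if `(a, m, u) ∈ 𝓘_ℓ`
satisfies `P_+`, then every triple occurring in the Y-system relation centered at
`(a, m, u)` satisfies `P'_+` (asserted whenever the middle entry is in the admissible
range). -/
theorem Ysystem_parity_compatible_odd (t ℓ : ℤ) (ht : 1 ≤ t) (htodd : Odd t)
    (hℓ : 2 ≤ ℓ) (a m n : ℤ)
    (hmem : (a = 1 ∨ a = 2) ∧ inRange t ℓ a m)
    (hP : PPlusOdd a m n) :
    PPlusOdd' a m (n - if a = 1 then t else 1) ∧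
    PPlusOdd' a m (n + if a = 1 then t else 1) ∧
    (inRange t ℓ a (m - 1) → PPlusOdd' a (m - 1) n) ∧
    (inRange t ℓ a (m + 1) → PPlusOdd' a (m + 1) n) ∧
    (a = 1 → ∀ j k : ℤ, -(t - 1) ≤ j → j ≤ t - 1 → 1 ≤ k → k ≤ t - |j| →
      (inRange t ℓ 2 (t * m + j) →
        PPlusOdd' 2 (t * m + j) (n + (t - |j| + 1 - 2 * k)))) ∧
    (a = 2 → t ∣ m → (inRange t ℓ 1 (m / t) → PPlusOdd' 1 (m / t) n)) := by
  obtain ⟨s, hts⟩ := htodd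
  obtain ⟨ha, _⟩ := hmem
  rcases ha with ha | ha
  · -- a = 1
    subst ha
    rcases hP with ⟨_, hmn⟩ | ⟨h2, _⟩
    · obtain ⟨p, hmn⟩ := hmn
      simp only [eq_self_iff_true, if_true]
      refine ⟨Or.inl ⟨rfl, ⟨p - s, ?_⟩⟩, Or.inl ⟨rfl, ⟨p + s + 1, ?_⟩⟩,
        fun _ => Or.inl ⟨rfl, ⟨p, ?_⟩⟩, fun _ => Or.inl ⟨rfl, ⟨p + 1, ?_⟩⟩,
        fun _ j k _ _ _ _ _ => Or.inr ⟨rfl, ?_⟩, fun h => by omega⟩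
      · omega
      · omega
      · omega
      · omega
      rcases abs_cases j with ⟨habs, _⟩ | ⟨habs, _⟩
      · exact ⟨s * m + p + s + 1 - k, by rw [habs]; linear_combination (m + 1) * hts + hmn⟩
      · exact ⟨s * m + p + s + 1 - k + j, by rw [habs]; linear_combination (m + 1) * hts + hmn⟩
    · omega
  · -- a = 2
    subst ha
    rcases hP with ⟨h1, _⟩ | ⟨_, hmn⟩
    · omega
    · obtain ⟨p, hmn⟩ := hmn
      simp only [if_neg (by omega : (2:ℤ) ≠ 1)]
      refine ⟨Or.inr ⟨rfl, ⟨p - 1, ?_⟩⟩, Or.inr ⟨rfl, ⟨p, ?_⟩⟩,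
        fun _ => Or.inr ⟨rfl, ⟨p - 1, ?_⟩⟩, fun _ => Or.inr ⟨rfl, ⟨p, ?_⟩⟩,
        fun h => by omega, fun _ hdvd _ => Or.inl ⟨rfl, ?_⟩⟩
      · omega
      · omega
      · omega
      · omega
      obtain ⟨q, hq⟩ := hdvd
      rw [hq, Int.mul_ediv_cancel_left _ (by omega : t ≠ 0)]
      exact ⟨p - s * q, by linear_combination hmn - q * hts - hq⟩
end

section
/- (Parity compatibility of the T-system for a general tamely laced Cartan matrix.) Let C, D = diag(d_a), t, t_a, 𝓘_ℓ be as in the context, and let I = I_+ ⊔ I_- be a decomposition such that: (I) if a ∼ b and d_a, d_b are both odd, then a and b lie in different parts; (II) if a ∼ b and at least one of d_a, d_b is even, then a and b lie in the same part. Define: (a,m,u) satisfies Q_+ iff (m+tu is even, when d_a is odd and a ∈ I_+), (m+tu is odd, when d_a is odd and a ∈ I_-), (tu is even, when d_a is even and a ∈ I_+), (tu is odd, when d_a is even and a ∈ I_-); and (a,m,u) satisfies Q'_+ iff (m+tu is odd, when d_a is odd and a ∈ I_+), (m+tu is even, when d_a is odd and a ∈ I_-), and the same condition as Q_+ when d_a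 is even. Suppose (a,m,u) ∈ 𝓘_ℓ satisfies Q'_+. Then every triple occurring in the T-system relation of 𝕋_ℓ(C) centered at (a,m,u) satisfies Q_+; explicitly: (a, m, u ± d_a/t) satisfy Q_+; (a, m±1, u) satisfy Q_+; if d_a > 1, for each b with b ∼ a the triple (b, (d_a/d_b)·m, u) satisfies Q_+; and if d_a = 1, for each b with b ∼ a, writing m = d_b·m' + j with 0 ≤ j < d_b, all the triples (b, m'+1, u + (j+1−2k)/t) for 1 ≤ k ≤ j and (b, m', u + (d_b−j+1−2k)/t) for 1 ≤ k ≤ d_b−j satisfy Q_+ (in each case the assertion is made whenever the middle entry lies in the admissible range 1 ≤ m ≤ t_b·ℓ − 1). -/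
/- We encode `u ∈ (1/t)ℤ` by the integer `n = t·u`; then `tu = n`, `m + tu = m + n`,
`u ± d_a/t` is encoded as `n ± d_a`, and `u + c/t` as `n + c`. -/

/-- The parity condition `Q_+` attached to a decomposition `I = I_+ ⊔ I_-` (here
`Ip = I_+`): `m + tu` even when `d_a` odd and `a ∈ I_+`; `m + tu` odd when `d_a` odd
and `a ∈ I_-`; `tu` even when `d_a` even and `a ∈ I_+`; `tu` odd when `d_a` even and
`a ∈ I_-`. -/
def QPlus {I : Type*} (d : I → ℤ) (Ip : Set I) (a : I) (m n : ℤ) : Prop :=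
  (Odd (d a) ∧ a ∈ Ip ∧ Even (m + n)) ∨
  (Odd (d a) ∧ a ∉ Ip ∧ Odd (m + n)) ∨
  (Even (d a) ∧ a ∈ Ip ∧ Even n) ∨
  (Even (d a) ∧ a ∉ Ip ∧ Odd n)

/-- The parity condition `Q'_+`: `m + tu` odd when `d_a` odd and `a ∈ I_+`; `m + tu`
even when `d_a` odd and `a ∈ I_-`; and the same condition as `Q_+` when `d_a` is even. -/
def QPlus' {I : Type*} (d : I → ℤ) (Ip : Set I) (a : I) (m n : ℤ) : Prop :=
  (Odd (d a) ∧ a ∈ Ip ∧ Odd (m + n)) ∨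
  (Odd (d a) ∧ a ∉ Ip ∧ Even (m + n)) ∨
  (Even (d a) ∧ a ∈ Ip ∧ Even n) ∨
  (Even (d a) ∧ a ∉ Ip ∧ Odd n)

/-- The admissible range `1 ≤ m ≤ t_b·ℓ − 1` (with `t_b = t/d_b`) of the middle entry. -/
def inRangeC {I : Type*} (d : I → ℤ) (t ℓ : ℤ) (b : I) (m : ℤ) : Prop :=
  1 ≤ m ∧ m ≤ (t / d b) * ℓ - 1

private lemma mulmod_one (x y : ℤ) (h : x % 2 = 1) : (x * y) % 2 = y % 2 := by
  have := Int.mul_emod x y 2; rw [h] at this; omega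

private lemma mulmod_zero (x y : ℤ) (h : x % 2 = 0) : (x * y) % 2 = 0 := by
  have := Int.mul_emod x y 2; rw [h] at this; omega


/-- Parity compatibility of the T-system `𝕋_ℓ(C)` for a general tamely laced Cartan
matrix `C` on a finite index set `I`: if `(a, m, u) ∈ 𝓘_ℓ` satisfies `Q'_+`, then every
triple occurring in the T-system relation centered at `(a, m, u)` satisfies `Q_+`
(asserted whenever the middle entry is in the admissible range). -/
theorem Tsystem_parity_compatible_tamely_laced
    {I : Type*} [Fintype I] [Nonempty I]
    (C : I → I → ℤ) (d : I → ℤ) (t ℓ : ℤ)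
    -- `C` is a generalized Cartan matrix:
    (hCdiag : ∀ a, C a a = 2)
    (hCoffdiag : ∀ a b, a ≠ b → C a b ≤ 0)
    (hCzero : ∀ a b, C a b = 0 ↔ C b a = 0)
    -- symmetrizable by `D = diag(d_a)`, with the `d_a` coprime:
    (hdpos : ∀ a, 1 ≤ d a)
    (hsym : ∀ a b, d a * C a b = d b * C b a)
    (hgcd : ∀ e : ℤ, (∀ a, e ∣ d a) → e ∣ 1)
    -- tamely laced:
    (htame : ∀ a b, C a b < -1 → d a = 1 ∧ C b a = -1)
    -- `t = lcm(d_a : a ∈ I)`: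
    (htpos : 1 ≤ t) (htcm : ∀ a, d a ∣ t) (htlcm : ∀ s : ℤ, (∀ a, d a ∣ s) → t ∣ s)
    (hℓ : 2 ≤ ℓ)
    -- the decomposition `I = I_+ ⊔ I_-` satisfying conditions (I) and (II):
    (Ip : Set I)
    (hI : ∀ a b, C a b < 0 → Odd (d a) → Odd (d b) → ¬(a ∈ Ip ↔ b ∈ Ip))
    (hII : ∀ a b, C a b < 0 → (Even (d a) ∨ Even (d b)) → (a ∈ Ip ↔ b ∈ Ip))
    -- the triple `(a, m, u) ∈ 𝓘_ℓ` satisfies `Q'_+`: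
    (a : I) (m n : ℤ)
    (hmem : inRangeC d t ℓ a m)
    (hQ : QPlus' d Ip a m n) :
    QPlus d Ip a m (n - d a) ∧
    QPlus d Ip a m (n + d a) ∧
    (inRangeC d t ℓ a (m - 1) → QPlus d Ip a (m - 1) n) ∧
    (inRangeC d t ℓ a (m + 1) → QPlus d Ip a (m + 1) n) ∧
    (1 < d a → ∀ b, C b a < 0 →
      (inRangeC d t ℓ b ((d a / d b) * m) → QPlus d Ip b ((d a / d b) * m) n)) ∧
    (d a = 1 → ∀ b, C b a < 0 → ∀ m' j : ℤ, 0 ≤ j → j < d b → m = d b * m' + j →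
      (∀ k : ℤ, 1 ≤ k → k ≤ j →
        (inRangeC d t ℓ b (m' + 1) → QPlus d Ip b (m' + 1) (n + (j + 1 - 2 * k)))) ∧
      (∀ k : ℤ, 1 ≤ k → k ≤ d b - j →
        (inRangeC d t ℓ b m' → QPlus d Ip b m' (n + (d b - j + 1 - 2 * k))))) := by
  
  classical
  have hC' : ∀ b, C b a < 0 → C a b < 0 := by
    intro b hb
    have hne : a ≠ b := by
      rintro rfl; rw [hCdiag] at hb; omega
    have h0 : C a b ≠ 0 := fun h => by rw [(hCzero a b).mp h] at hb; omega
    have := hCoffdiag a b hne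
    omega
  simp only [QPlus', Int.even_iff, Int.odd_iff] at hQ
  refine ⟨?_, ?_, ?_, ?_, ?_, ?_⟩
  · simp only [QPlus, Int.even_iff, Int.odd_iff]
    rcases hQ with ⟨h1,h2,h3⟩|⟨h1,h2,h3⟩|⟨h1,h2,h3⟩|⟨h1,h2,h3⟩
    · exact Or.inl ⟨h1, h2, by omega⟩
    · exact Or.inr (Or.inl ⟨h1, h2, by omega⟩)
    · exact Or.inr (Or.inr (Or.inl ⟨h1, h2, by omega⟩))
    · exact Or.inr (Or.inr (Or.inr ⟨h1, h2, by omega⟩))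
  · simp only [QPlus, Int.even_iff, Int.odd_iff]
    rcases hQ with ⟨h1,h2,h3⟩|⟨h1,h2,h3⟩|⟨h1,h2,h3⟩|⟨h1,h2,h3⟩
    · exact Or.inl ⟨h1, h2, by omega⟩
    · exact Or.inr (Or.inl ⟨h1, h2, by omega⟩)
    · exact Or.inr (Or.inr (Or.inl ⟨h1, h2, by omega⟩))
    · exact Or.inr (Or.inr (Or.inr ⟨h1, h2, by omega⟩))
  · intro _
    simp only [QPlus, Int.even_iff, Int.odd_iff]
    rcases hQ with ⟨h1,h2,h3⟩|⟨h1,h2,h3⟩|⟨h1,h2,h3⟩|⟨h1,h2,h3⟩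
    · exact Or.inl ⟨h1, h2, by omega⟩
    · exact Or.inr (Or.inl ⟨h1, h2, by omega⟩)
    · exact Or.inr (Or.inr (Or.inl ⟨h1, h2, h3⟩))
    · exact Or.inr (Or.inr (Or.inr ⟨h1, h2, h3⟩))
  · intro _
    simp only [QPlus, Int.even_iff, Int.odd_iff]
    rcases hQ with ⟨h1,h2,h3⟩|⟨h1,h2,h3⟩|⟨h1,h2,h3⟩|⟨h1,h2,h3⟩
    · exact Or.inl ⟨h1, h2, by omega⟩
    · exact Or.inr (Or.inl ⟨h1, h2, by omega⟩)
    · exact Or.inr (Or.inr (Or.inl ⟨h1, h2, h3⟩))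
    · exact Or.inr (Or.inr (Or.inr ⟨h1, h2, h3⟩))
  · intro hda b hba _
    have hab := hC' b hba
    have habm1 : C a b = -1 := by
      rcases lt_or_ge (C a b) (-1) with h | h
      · have := (htame a b h).1; omega
      · omega
    have hdbpos := hdpos b
    have hdvd : d a = d b * (-C b a) := by
      have h := hsym a b; rw [habm1] at h; linear_combination -h
    have hq : d a / d b = -C b a := by
      rw [hdvd]; exact Int.mul_ediv_cancel_left _ (by omega)
    rw [hq]
    simp only [QPlus, Int.even_iff, Int.odd_iff]
    rcases Int.emod_two_eq_zero_or_one (d b) with hdb | hdb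
    · have hda2 : d a % 2 = 0 := by rw [hdvd]; exact mulmod_zero _ _ hdb
      have hiff := hII a b hab (Or.inl (Int.even_iff.mpr hda2))
      rcases hQ with ⟨h1,h2,h3⟩|⟨h1,h2,h3⟩|⟨h1,h2,h3⟩|⟨h1,h2,h3⟩
      · omega
      · omega
      · exact Or.inr (Or.inr (Or.inl ⟨hdb, hiff.mp h2, h3⟩))
      · exact Or.inr (Or.inr (Or.inr ⟨hdb, fun hb => h2 (hiff.mpr hb), h3⟩))
    · rcases Int.emod_two_eq_zero_or_one (-C b a) with hc | hc
      · have hda2 : d a % 2 = 0 := by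
          have h := Int.mul_emod (d b) (-C b a) 2
          rw [hdb, hc] at h; rw [hdvd]; omega
        have hiff := hII a b hab (Or.inl (Int.even_iff.mpr hda2))
        have hqm : (-C b a * m) % 2 = 0 := mulmod_zero _ _ hc
        rcases hQ with ⟨h1,h2,h3⟩|⟨h1,h2,h3⟩|⟨h1,h2,h3⟩|⟨h1,h2,h3⟩
        · omega
        · omega
        · exact Or.inl ⟨hdb, hiff.mp h2, by omega⟩
        · exact Or.inr (Or.inl ⟨hdb, fun hb => h2 (hiff.mpr hb), by omega⟩)
      · have hda2 : d a % 2 = 1 := by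
          have h := Int.mul_emod (d b) (-C b a) 2
          rw [hdb, hc] at h; rw [hdvd]; omega
        have hne := hI a b hab (Int.odd_iff.mpr hda2) (Int.odd_iff.mpr hdb)
        have hqm : (-C b a * m) % 2 = m % 2 := mulmod_one _ _ hc
        rcases hQ with ⟨h1,h2,h3⟩|⟨h1,h2,h3⟩|⟨h1,h2,h3⟩|⟨h1,h2,h3⟩
        · exact Or.inr (Or.inl ⟨hdb, fun hb => hne (iff_of_true h2 hb), by omega⟩)
        · have hb : b ∈ Ip := by
            by_contra hb; exact hne (iff_of_false h2 hb)
          exact Or.inl ⟨hdb, hb, by omega⟩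
        · omega
        · omega
  · intro hda1 b hba m' j hj0 hjdb hm
    have hab := hC' b hba
    have hda2 : d a % 2 = 1 := by omega
    have hmn : (a ∈ Ip ∧ (m + n) % 2 = 1) ∨ (a ∉ Ip ∧ (m + n) % 2 = 0) := by
      rcases hQ with ⟨h1,h2,h3⟩|⟨h1,h2,h3⟩|⟨h1,h2,h3⟩|⟨h1,h2,h3⟩
      · exact Or.inl ⟨h2, h3⟩
      · exact Or.inr ⟨h2, h3⟩
      · omega
      · omega
    rcases Int.emod_two_eq_zero_or_one (d b) with hdb | hdb
    · have hiff := hII a b hab (Or.inr (Int.even_iff.mpr hdb))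
      have hmm : (d b * m') % 2 = 0 := mulmod_zero _ _ hdb
      constructor
      · intro k hk1 hk2 _
        simp only [QPlus, Int.even_iff, Int.odd_iff]
        rcases hmn with ⟨h2,h3⟩|⟨h2,h3⟩
        · exact Or.inr (Or.inr (Or.inl ⟨hdb, hiff.mp h2, by omega⟩))
        · exact Or.inr (Or.inr (Or.inr ⟨hdb, fun hb => h2 (hiff.mpr hb), by omega⟩))
      · intro k hk1 hk2 _
        simp only [QPlus, Int.even_iff, Int.odd_iff]
        rcases hmn with ⟨h2,h3⟩|⟨h2,h3⟩
        · exact Or.inr (Or.inr (Or.inl ⟨hdb, hiff.mp h2, by omega⟩))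
        · exact Or.inr (Or.inr (Or.inr ⟨hdb, fun hb => h2 (hiff.mpr hb), by omega⟩))
    · have hne := hI a b hab (Int.odd_iff.mpr hda2) (Int.odd_iff.mpr hdb)
      have hmm : (d b * m') % 2 = m' % 2 := mulmod_one _ _ hdb
      constructor
      · intro k hk1 hk2 _
        simp only [QPlus, Int.even_iff, Int.odd_iff]
        rcases hmn with ⟨h2,h3⟩|⟨h2,h3⟩
        · exact Or.inr (Or.inl ⟨hdb, fun hb => hne (iff_of_true h2 hb), by omega⟩)
        · have hb : b ∈ Ip := by
            by_contra hb; exact hne (iff_of_false h2 hb)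
          exact Or.inl ⟨hdb, hb, by omega⟩
      · intro k hk1 hk2 _
        simp only [QPlus, Int.even_iff, Int.odd_iff]
        rcases hmn with ⟨h2,h3⟩|⟨h2,h3⟩
        · exact Or.inr (Or.inl ⟨hdb, fun hb => hne (iff_of_true h2 hb), by omega⟩)
        · have hb : b ∈ Ip := by
            by_contra hb; exact hne (iff_of_false h2 hb)
          exact Or.inl ⟨hdb, hb, by omega⟩
end
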